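/- arXiv:2602.16595 — 6 statements merged into one kernel-verified Lean document; each statement's English description precedes it below -/
import Mathlib

section
/- Let A be a set of n distinct integers (n ≥ 1), let ℓ ≥ 1, and let Y₁, …, Y_ℓ be independent random variables each uniformly distributed on A, with Y = Y₁ + ⋯ + Y_ℓ. Let Ỹ₁, …, Ỹ_ℓ be independent random variables each uniformly distributed on the interval of integers {0, 1, …, n−1}, with Ỹ = Ỹ₁ + ⋯ + Ỹ_ℓ. Then max over x ∈ ℤ of P[Y = x] is at most max over x ∈ ℤ of P[Ỹ = x]. -/
namespace LR

def rk {ℓ : ℕ} (t : Fin ℓ → ℕ) : ℕ := ∑ i, t i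

structure SCD (n ℓ : ℕ) where
  low : (Fin ℓ → ℕ) → ℕ
  F : (Fin ℓ → ℕ) → ℕ → (Fin ℓ → ℕ)
  low_le_rank : ∀ t, (∀ i, t i < n) → low t ≤ rk t
  rank_le : ∀ t, (∀ i, t i < n) → rk t + low t ≤ ℓ * (n - 1)
  mem_F : ∀ t k, (∀ i, t i < n) → low t ≤ k → k + low t ≤ ℓ * (n - 1) →
    ∀ i, F t k i < n
  rank_F : ∀ t k, (∀ i, t i < n) → low t ≤ k → k + low t ≤ ℓ * (n - 1) →
    rk (F t k) = k
  F_rank : ∀ t, (∀ i, t i < n) → F t (rk t) = t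
  low_F : ∀ t k, (∀ i, t i < n) → low t ≤ k → k + low t ≤ ℓ * (n - 1) →
    low (F t k) = low t
  F_F : ∀ t k, (∀ i, t i < n) → low t ≤ k → k + low t ≤ ℓ * (n - 1) →
    F (F t k) = F t
  mono : ∀ t k, (∀ i, t i < n) → low t ≤ k → (k + 1) + low t ≤ ℓ * (n - 1) →
    F t k ≤ F t (k + 1)

variable {n ℓ : ℕ}

lemma rk_tail (u : Fin (ℓ+1) → ℕ) : rk u = u 0 + rk (Fin.tail u) := by
  simpa [rk, Fin.tail] using Fin.sum_univ_succ (f := u)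

lemma rk_cons (a : ℕ) (t : Fin ℓ → ℕ) : rk (Fin.cons a t) = a + rk t := by
  simpa [rk] using Fin.sum_cons a t

lemma cons_le_cons {a b : ℕ} {s s' : Fin ℓ → ℕ} (h1 : a ≤ b) (h2 : s ≤ s') :
    (Fin.cons a s : Fin (ℓ+1) → ℕ) ≤ Fin.cons b s' := by
  intro idx
  refine Fin.cases ?_ ?_ idx
  · simpa using h1
  · intro i; simpa using h2 i

def scdZero (n : ℕ) : SCD n 0 where
  low _ := 0
  F t _ := t
  low_le_rank _ _ := le_refl _
  rank_le t _ := by simp [rk]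
  mem_F t k h _ _ i := h i
  rank_F t k _ h1 h2 := by simp [rk] at *; omega
  F_rank _ _ := rfl
  low_F _ _ _ _ _ := rfl
  F_F _ _ _ _ _ := rfl
  mono _ _ _ _ _ := le_refl _

/-- hook index of `u` in the grid (chain of `tail u`) × (new coordinate `u 0`). -/
def jf (S : SCD n ℓ) (u : Fin (ℓ+1) → ℕ) : ℕ :=
  if (rk (Fin.tail u) - S.low (Fin.tail u)) + u 0 ≤ ℓ*(n-1) - 2*S.low (Fin.tail u)
  then u 0
  else (ℓ*(n-1) - 2*S.low (Fin.tail u)) - (rk (Fin.tail u) - S.low (Fin.tail u))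

/-- element of `u`'s hook at (absolute) rank `k`. -/
def Ff (S : SCD n ℓ) (u : Fin (ℓ+1) → ℕ) (k : ℕ) : Fin (ℓ+1) → ℕ :=
  Fin.cons
    (max (jf S u) ((k - S.low (Fin.tail u)) - ((ℓ*(n-1) - 2*S.low (Fin.tail u)) - jf S u)))
    (S.F (Fin.tail u)
      (S.low (Fin.tail u) + min ((k - S.low (Fin.tail u)) - jf S u) ((ℓ*(n-1) - 2*S.low (Fin.tail u)) - jf S u)))

lemma base_facts (S : SCD n ℓ) (u : Fin (ℓ+1) → ℕ) (hu : ∀ i, u i < n) :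
    (∀ i, Fin.tail u i < n) ∧ u 0 < n ∧
    S.low (Fin.tail u) ≤ rk (Fin.tail u) ∧
    rk (Fin.tail u) + S.low (Fin.tail u) ≤ ℓ*(n-1) ∧
    jf S u ≤ ℓ*(n-1) - 2*S.low (Fin.tail u) ∧ jf S u < n ∧
    jf S u ≤ (rk (Fin.tail u) - S.low (Fin.tail u)) + u 0 ∧
    (rk (Fin.tail u) - S.low (Fin.tail u)) + u 0 + jf S u
      ≤ (ℓ*(n-1) - 2*S.low (Fin.tail u)) + (n-1) := by
  have hmt : ∀ i, Fin.tail u i < n := fun i => hu i.succ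
  have ha : u 0 < n := hu 0
  have hr := S.low_le_rank _ hmt
  have hN := S.rank_le _ hmt
  refine ⟨hmt, ha, hr, hN, ?_, ?_, ?_, ?_⟩ <;>
    · unfold jf; split_ifs with h <;> omega

lemma succ_mul_sub : (ℓ+1)*(n-1) = ℓ*(n-1) + (n-1) := by ring

end LR

namespace LR2
open LR
variable {n ℓ : ℕ}

lemma Ff_def (S : SCD n ℓ) (u : Fin (ℓ+1) → ℕ) (k : ℕ) :
    Ff S u k = Fin.cons
      (max (jf S u) ((k - S.low (Fin.tail u)) - ((ℓ*(n-1) - 2*S.low (Fin.tail u)) - jf S u)))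
      (S.F (Fin.tail u)
        (S.low (Fin.tail u) + min ((k - S.low (Fin.tail u)) - jf S u)
          ((ℓ*(n-1) - 2*S.low (Fin.tail u)) - jf S u))) := rfl

lemma jf_cons (S : SCD n ℓ) (c : ℕ) (s : Fin ℓ → ℕ) :
    jf S (Fin.cons c s) = if (rk s - S.low s) + c ≤ ℓ*(n-1) - 2*S.low s then c
      else (ℓ*(n-1) - 2*S.low s) - (rk s - S.low s) := by
  simp only [jf, Fin.tail_cons, Fin.cons_zero]

lemma Ff_spec (S : SCD n ℓ) (u : Fin (ℓ+1) → ℕ) (hu : ∀ i, u i < n) (k : ℕ)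
    (hk1 : S.low (Fin.tail u) + jf S u ≤ k)
    (hk2 : k + (S.low (Fin.tail u) + jf S u) ≤ (ℓ+1)*(n-1)) :
    (∀ i, Ff S u k i < n) ∧ rk (Ff S u k) = k ∧
    S.low (Fin.tail (Ff S u k)) = S.low (Fin.tail u) ∧
    jf S (Ff S u k) = jf S u ∧
    S.F (Fin.tail (Ff S u k)) = S.F (Fin.tail u) := by
  obtain ⟨hmt, ha, hr, hN, hjH, hjn, hjia, htop⟩ := base_facts S u hu
  have hn1 : 1 ≤ n := by omega
  rw [succ_mul_sub] at hk2
  have hbv1 : S.low (Fin.tail u) ≤ S.low (Fin.tail u) +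
      min ((k - S.low (Fin.tail u)) - jf S u) ((ℓ*(n-1) - 2*S.low (Fin.tail u)) - jf S u) :=
    Nat.le_add_right _ _
  have hbv2 : (S.low (Fin.tail u) +
      min ((k - S.low (Fin.tail u)) - jf S u) ((ℓ*(n-1) - 2*S.low (Fin.tail u)) - jf S u))
      + S.low (Fin.tail u) ≤ ℓ*(n-1) := by omega
  have hmem := S.mem_F _ _ hmt hbv1 hbv2
  have hrk := S.rank_F _ _ hmt hbv1 hbv2
  have hlow := S.low_F _ _ hmt hbv1 hbv2
  have hFF := S.F_F _ _ hmt hbv1 hbv2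
  rw [Ff_def]
  refine ⟨?_, ?_, ?_, ?_, ?_⟩
  · intro i
    refine Fin.cases ?_ ?_ i
    · simp only [Fin.cons_zero]; omega
    · intro i; simpa only [Fin.cons_succ] using hmem i
  · rw [rk_cons, hrk]; omega
  · rw [Fin.tail_cons, hlow]
  · rw [jf_cons, hrk, hlow]
    split_ifs with h <;> omega
  · rw [Fin.tail_cons, hFF]

def scdSucc (S : SCD n ℓ) : SCD n (ℓ+1) where
  low u := S.low (Fin.tail u) + jf S u
  F := Ff S
  low_le_rank u hu := by
    obtain ⟨hmt, ha, hr, hN, hjH, hjn, hjia, htop⟩ := base_facts S u hu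
    show S.low (Fin.tail u) + jf S u ≤ rk u
    rw [rk_tail]; omega
  rank_le u hu := by
    obtain ⟨hmt, ha, hr, hN, hjH, hjn, hjia, htop⟩ := base_facts S u hu
    show rk u + (S.low (Fin.tail u) + jf S u) ≤ (ℓ+1) * (n-1)
    rw [rk_tail, succ_mul_sub]; omega
  mem_F u k hu hk1 hk2 := (Ff_spec S u hu k hk1 hk2).1
  rank_F u k hu hk1 hk2 := (Ff_spec S u hu k hk1 hk2).2.1
  F_rank u hu := by
    obtain ⟨hmt, ha, hr, hN, hjH, hjn, hjia, htop⟩ := base_facts S u hu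
    have hrku : rk u = u 0 + rk (Fin.tail u) := rk_tail u
    have hj : ((rk (Fin.tail u) - S.low (Fin.tail u)) + u 0 ≤ ℓ*(n-1) - 2*S.low (Fin.tail u)
          ∧ jf S u = u 0) ∨
        (¬((rk (Fin.tail u) - S.low (Fin.tail u)) + u 0 ≤ ℓ*(n-1) - 2*S.low (Fin.tail u))
          ∧ jf S u = (ℓ*(n-1) - 2*S.low (Fin.tail u)) - (rk (Fin.tail u) - S.low (Fin.tail u))) := by
      unfold jf
      split_ifs with h
      · exact Or.inl ⟨h, rfl⟩
      · exact Or.inr ⟨h, rfl⟩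
    have hrow : S.low (Fin.tail u) +
        min ((rk u - S.low (Fin.tail u)) - jf S u) ((ℓ*(n-1) - 2*S.low (Fin.tail u)) - jf S u)
        = rk (Fin.tail u) := by rcases hj with ⟨h1, h2⟩ | ⟨h1, h2⟩ <;> omega
    have hcol : max (jf S u)
        ((rk u - S.low (Fin.tail u)) - ((ℓ*(n-1) - 2*S.low (Fin.tail u)) - jf S u)) = u 0 := by
      rcases hj with ⟨h1, h2⟩ | ⟨h1, h2⟩ <;> omega
    show Ff S u (rk u) = u
    rw [Ff_def, hrow, hcol, S.F_rank _ hmt, Fin.cons_self_tail]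
  low_F u k hu hk1 hk2 := by
    have h := Ff_spec S u hu k hk1 hk2
    show S.low (Fin.tail (Ff S u k)) + jf S (Ff S u k) = S.low (Fin.tail u) + jf S u
    rw [h.2.2.1, h.2.2.2.1]
  F_F u k hu hk1 hk2 := by
    have h := Ff_spec S u hu k hk1 hk2
    funext k'
    show Ff S (Ff S u k) k' = Ff S u k'
    rw [Ff_def S (Ff S u k) k', Ff_def S u k', h.2.2.1, h.2.2.2.1, h.2.2.2.2]
  mono u k hu hk1 hk2 := by
    obtain ⟨hmt, ha, hr, hN, hjH, hjn, hjia, htop⟩ := base_facts S u hu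
    have hk1' : S.low (Fin.tail u) + jf S u ≤ k := hk1
    have hk2' : (k+1) + (S.low (Fin.tail u) + jf S u) ≤ (ℓ+1)*(n-1) := hk2
    rw [succ_mul_sub] at hk2'
    show Ff S u k ≤ Ff S u (k+1)
    rw [Ff_def S u k, Ff_def S u (k+1)]
    have key : (min ((k+1 - S.low (Fin.tail u)) - jf S u) ((ℓ*(n-1) - 2*S.low (Fin.tail u)) - jf S u)
          = min ((k - S.low (Fin.tail u)) - jf S u) ((ℓ*(n-1) - 2*S.low (Fin.tail u)) - jf S u)
        ∧ max (jf S u) ((k+1 - S.low (Fin.tail u)) - ((ℓ*(n-1) - 2*S.low (Fin.tail u)) - jf S u))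
          = max (jf S u) ((k - S.low (Fin.tail u)) - ((ℓ*(n-1) - 2*S.low (Fin.tail u)) - jf S u)) + 1)
      ∨ (min ((k+1 - S.low (Fin.tail u)) - jf S u) ((ℓ*(n-1) - 2*S.low (Fin.tail u)) - jf S u)
          = min ((k - S.low (Fin.tail u)) - jf S u) ((ℓ*(n-1) - 2*S.low (Fin.tail u)) - jf S u) + 1
        ∧ max (jf S u) ((k+1 - S.low (Fin.tail u)) - ((ℓ*(n-1) - 2*S.low (Fin.tail u)) - jf S u))
          = max (jf S u) ((k - S.low (Fin.tail u)) - ((ℓ*(n-1) - 2*S.low (Fin.tail u)) - jf S u))) := by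
      omega
    rcases key with ⟨h1, h2⟩ | ⟨h1, h2⟩
    · rw [h1, h2]
      exact cons_le_cons (Nat.le_succ _) (le_refl _)
    · rw [h1, h2]
      refine cons_le_cons (le_refl _) ?_
      have hb1 : S.low (Fin.tail u) ≤ S.low (Fin.tail u) +
          min ((k - S.low (Fin.tail u)) - jf S u) ((ℓ*(n-1) - 2*S.low (Fin.tail u)) - jf S u) :=
        Nat.le_add_right _ _
      have hb2 : (S.low (Fin.tail u) +
          min ((k - S.low (Fin.tail u)) - jf S u) ((ℓ*(n-1) - 2*S.low (Fin.tail u)) - jf S u)) + 1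
          + S.low (Fin.tail u) ≤ ℓ*(n-1) := by omega
      have h := S.mono _ _ hmt hb1 hb2
      simpa [Nat.add_assoc] using h

def scd (n : ℕ) : ∀ ℓ, SCD n ℓ
  | 0 => scdZero n
  | (ℓ+1) => scdSucc (scd n ℓ)

end LR2

namespace LR3
open LR LR2
variable {n ℓ : ℕ}

lemma F_le_F (S : SCD n ℓ) (t : Fin ℓ → ℕ) (ht : ∀ i, t i < n) {k k' : ℕ}
    (h1 : S.low t ≤ k) (h2 : k ≤ k') (h3 : k' + S.low t ≤ ℓ*(n-1)) :
    S.F t k ≤ S.F t k' := by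
  induction k' with
  | zero => have : k = 0 := by omega
            subst this; exact le_refl _
  | succ m ih =>
    rcases Nat.lt_or_ge k (m+1) with h | h
    · have hkm : k ≤ m := by omega
      have h3' : m + S.low t ≤ ℓ*(n-1) := by omega
      exact le_trans (ih hkm h3') (S.mono t m ht (le_trans h1 hkm) h3)
    · have : k = m + 1 := by omega
      subst this; exact le_refl _

/-- Sperner property of the product of chains: any antichain in `{0,…,n-1}^ℓ`
has size at most that of the middle rank level. -/
theorem antichain_card_le (n ℓ : ℕ) (B : Finset (Fin ℓ → ℕ))
    (hmem : ∀ t ∈ B, ∀ i, t i < n)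
    (hanti : ∀ t ∈ B, ∀ s ∈ B, t ≤ s → t = s) :
    B.card ≤ ((Fintype.piFinset fun _ : Fin ℓ => Finset.range n).filter
      (fun t => rk t = ℓ*(n-1)/2)).card := by
  classical
  set S := scd n ℓ with hS
  set m := ℓ*(n-1)/2 with hm
  have hrange : ∀ t ∈ B, S.low t ≤ m ∧ m + S.low t ≤ ℓ*(n-1) := by
    intro t ht
    have h1 := S.low_le_rank t (hmem t ht)
    have h2 := S.rank_le t (hmem t ht)
    have h3 : rk t ≤ ℓ*(n-1) := by omega
    constructor <;> omega
  apply Finset.card_le_card_of_injOn (fun t => S.F t m)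
  · intro t ht
    obtain ⟨hr1, hr2⟩ := hrange t ht
    rw [Finset.mem_coe, Finset.mem_filter]
    constructor
    · rw [Fintype.mem_piFinset]
      intro i
      rw [Finset.mem_range]
      exact S.mem_F t m (hmem t ht) hr1 hr2 i
    · exact S.rank_F t m (hmem t ht) hr1 hr2
  · intro t ht s hs heq
    simp only at heq
    obtain ⟨ht1, ht2⟩ := hrange t ht
    obtain ⟨hs1, hs2⟩ := hrange s hs
    have hFt : S.F (S.F t m) = S.F t := S.F_F t m (hmem t ht) ht1 ht2
    have hFs : S.F (S.F s m) = S.F s := S.F_F s m (hmem s hs) hs1 hs2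
    have hFeq : S.F t = S.F s := by rw [← hFt, ← hFs, heq]
    have hlt : S.low (S.F t m) = S.low t := S.low_F t m (hmem t ht) ht1 ht2
    have hls : S.low (S.F s m) = S.low s := S.low_F s m (hmem s hs) hs1 hs2
    have hloweq : S.low t = S.low s := by rw [← hlt, ← hls, heq]
    have hteq : S.F t (rk t) = t := S.F_rank t (hmem t ht)
    have hseq : S.F t (rk s) = s := by rw [hFeq]; exact S.F_rank s (hmem s hs)
    have hrt1 := S.low_le_rank t (hmem t ht)
    have hrt2 := S.rank_le t (hmem t ht)
    have hrs1 := S.low_le_rank s (hmem s hs)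
    have hrs2 := S.rank_le s (hmem s hs)
    rcases le_total (rk t) (rk s) with h | h
    · have := F_le_F S t (hmem t ht) hrt1 h (by omega)
      rw [hteq, hseq] at this
      exact hanti t ht s hs this
    · have := F_le_F S t (hmem t ht) (by omega) h (by omega)
      rw [hteq, hseq] at this
      exact (hanti s hs t ht this).symm

end LR3

namespace LRP
open MeasureTheory ProbabilityTheory ENNReal

lemma prob_le {Ω : Type} [MeasurableSpace Ω] (μ : Measure Ω) [IsProbabilityMeasure μ]
    (ℓ : ℕ) (W : Finset ℤ) (X : Fin ℓ → Ω → ℤ)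
    (hind : iIndepFun X μ)
    (hunif : ∀ i, ∀ a : ℤ, μ {ω | X i ω = a} = if a ∈ W then ((W.card : ℝ≥0∞))⁻¹ else 0)
    (x : ℤ) :
    μ {ω | (∑ i, X i ω) = x} ≤
      ((((Fintype.piFinset fun _ : Fin ℓ => W).filter fun c => ∑ i, c i = x).card : ℝ≥0∞))
        * (((W.card : ℝ≥0∞))⁻¹)^ℓ := by
  classical
  have hbad : ∀ i, μ {ω | X i ω ∉ W} = 0 := by
    intro i
    have hsub : {ω | X i ω ∉ W} ⊆ ⋃ a : ℤ, {ω | X i ω = a ∧ a ∉ W} := by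
      intro ω h; exact Set.mem_iUnion.mpr ⟨X i ω, rfl, h⟩
    refine measure_mono_null hsub (measure_iUnion_null fun a => ?_)
    by_cases hmem : a ∈ W
    · have he : {ω | X i ω = a ∧ a ∉ W} = ∅ := by ext ω; simp [hmem]
      simp [he]
    · have h0 : μ {ω | X i ω = a} = 0 := by rw [hunif i a]; simp [hmem]
      exact measure_mono_null (fun ω h => h.1) h0
  have hatom : ∀ c : Fin ℓ → ℤ, (∀ i, c i ∈ W) →
      μ {ω | ∀ i, X i ω = c i} = (((W.card : ℝ≥0∞))⁻¹)^ℓ := by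
    intro c hc
    have hset : {ω | ∀ i, X i ω = c i} = ⋂ i, X i ⁻¹' {c i} := by
      ext ω; simp [Set.mem_iInter]
    rw [hset, hind.meas_iInter (fun i => ⟨{c i}, measurableSet_singleton _, rfl⟩)]
    have hone : ∀ i : Fin ℓ, μ (X i ⁻¹' {c i}) = ((W.card : ℝ≥0∞))⁻¹ := by
      intro i
      have h1 : X i ⁻¹' {c i} = {ω | X i ω = c i} := by ext ω; simp
      rw [h1, hunif i (c i), if_pos (hc i)]
    rw [Finset.prod_congr rfl (fun i _ => hone i)]
    simp
  have hcover : {ω | (∑ i, X i ω) = x} ⊆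
      (⋃ c ∈ ((Fintype.piFinset fun _ : Fin ℓ => W).filter fun c => ∑ i, c i = x),
        {ω | ∀ i, X i ω = c i}) ∪ ⋃ i, {ω | X i ω ∉ W} := by
    intro ω hω
    by_cases hall : ∀ i, X i ω ∈ W
    · left
      exact Set.mem_iUnion₂.mpr ⟨fun i => X i ω,
        Finset.mem_filter.mpr ⟨Fintype.mem_piFinset.mpr hall, hω⟩, fun i => rfl⟩
    · right
      push_neg at hall
      obtain ⟨i, hi⟩ := hall
      exact Set.mem_iUnion.mpr ⟨i, hi⟩
  calc μ {ω | (∑ i, X i ω) = x}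
      ≤ μ ((⋃ c ∈ ((Fintype.piFinset fun _ : Fin ℓ => W).filter fun c => ∑ i, c i = x),
          {ω | ∀ i, X i ω = c i}) ∪ ⋃ i, {ω | X i ω ∉ W}) := measure_mono hcover
    _ ≤ μ (⋃ c ∈ ((Fintype.piFinset fun _ : Fin ℓ => W).filter fun c => ∑ i, c i = x),
          {ω | ∀ i, X i ω = c i}) + μ (⋃ i, {ω | X i ω ∉ W}) := measure_union_le _ _
    _ = μ (⋃ c ∈ ((Fintype.piFinset fun _ : Fin ℓ => W).filter fun c => ∑ i, c i = x),
          {ω | ∀ i, X i ω = c i}) := by rw [measure_iUnion_null hbad, add_zero]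
    _ ≤ ∑ c ∈ ((Fintype.piFinset fun _ : Fin ℓ => W).filter fun c => ∑ i, c i = x),
          μ {ω | ∀ i, X i ω = c i} := measure_biUnion_finset_le _ _
    _ = ∑ c ∈ ((Fintype.piFinset fun _ : Fin ℓ => W).filter fun c => ∑ i, c i = x),
          (((W.card : ℝ≥0∞))⁻¹)^ℓ := by
            refine Finset.sum_congr rfl fun c hc => ?_
            exact hatom c (Fintype.mem_piFinset.mp (Finset.mem_filter.mp hc).1)
    _ = _ := by rw [Finset.sum_const, nsmul_eq_mul]

end LRP
-- appended into s.lean after testing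
namespace LRP2
open MeasureTheory ProbabilityTheory ENNReal LRP

lemma prob_ge {Ω : Type} [MeasurableSpace Ω] (ν : Measure Ω) [IsProbabilityMeasure ν]
    (ℓ : ℕ) (W : Finset ℤ) (hW : W.Nonempty) (X : Fin ℓ → Ω → ℤ)
    (hind : iIndepFun X ν)
    (hunif : ∀ i, ∀ a : ℤ, ν {ω | X i ω = a} = if a ∈ W then ((W.card : ℝ≥0∞))⁻¹ else 0)
    (x₀ : ℤ) :
    ((((Fintype.piFinset fun _ : Fin ℓ => W).filter fun c => ∑ i, c i = x₀).card : ℝ≥0∞))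
      * (((W.card : ℝ≥0∞))⁻¹)^ℓ ≤ ν {ω | (∑ i, X i ω) = x₀} := by
  classical
  set P := (Fintype.piFinset fun _ : Fin ℓ => W) with hP
  set J := P.image (fun c => ∑ i, c i) with hJ
  set q := (((W.card : ℝ≥0∞))⁻¹)^ℓ with hq
  have hbad : ∀ i, ν {ω | X i ω ∉ W} = 0 := by
    intro i
    have hsub : {ω | X i ω ∉ W} ⊆ ⋃ a : ℤ, {ω | X i ω = a ∧ a ∉ W} := by
      intro ω h; exact Set.mem_iUnion.mpr ⟨X i ω, rfl, h⟩
    refine measure_mono_null hsub (measure_iUnion_null fun a => ?_)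
    by_cases hmem : a ∈ W
    · have he : {ω | X i ω = a ∧ a ∉ W} = ∅ := by ext ω; simp [hmem]
      simp [he]
    · have h0 : ν {ω | X i ω = a} = 0 := by rw [hunif i a]; simp [hmem]
      exact measure_mono_null (fun ω h => h.1) h0
  have h1 : (1:ℝ≥0∞) ≤ ∑ x ∈ J, ν {ω | (∑ i, X i ω) = x} := by
    have hcoverU : (Set.univ : Set Ω) ⊆
        (⋃ x ∈ J, {ω | (∑ i, X i ω) = x}) ∪ ⋃ i, {ω | X i ω ∉ W} := by
      intro ω _
      by_cases hall : ∀ i, X i ω ∈ W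
      · left
        exact Set.mem_iUnion₂.mpr ⟨∑ i, X i ω,
          Finset.mem_image.mpr ⟨fun i => X i ω, Fintype.mem_piFinset.mpr hall, rfl⟩, rfl⟩
      · right
        push_neg at hall
        obtain ⟨i, hi⟩ := hall
        exact Set.mem_iUnion.mpr ⟨i, hi⟩
    calc (1:ℝ≥0∞) = ν Set.univ := (measure_univ).symm
      _ ≤ ν ((⋃ x ∈ J, {ω | (∑ i, X i ω) = x}) ∪ ⋃ i, {ω | X i ω ∉ W}) :=
          measure_mono hcoverU
      _ ≤ ν (⋃ x ∈ J, {ω | (∑ i, X i ω) = x}) + ν (⋃ i, {ω | X i ω ∉ W}) :=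
          measure_union_le _ _
      _ = ν (⋃ x ∈ J, {ω | (∑ i, X i ω) = x}) := by rw [measure_iUnion_null hbad, add_zero]
      _ ≤ ∑ x ∈ J, ν {ω | (∑ i, X i ω) = x} := measure_biUnion_finset_le _ _
  have hPcard : P.card = W.card ^ ℓ := by
    rw [hP, Fintype.card_piFinset]
    simp
  have hcards : ∑ x ∈ J.erase x₀, (P.filter fun c => ∑ i, c i = x).card
      + (P.filter fun c => ∑ i, c i = x₀).card ≤ W.card ^ ℓ := by
    have hfib : P.card = ∑ x ∈ J, (P.filter fun c => ∑ i, c i = x).card :=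
      Finset.card_eq_sum_card_fiberwise (fun c hc => Finset.mem_image_of_mem _ hc)
    by_cases hx : x₀ ∈ J
    · rw [Finset.sum_erase_add J _ hx, ← hfib, hPcard]
    · have hT0 : (P.filter fun c => ∑ i, c i = x₀) = ∅ := by
        rw [Finset.filter_eq_empty_iff]
        intro c hc hsum
        exact hx (Finset.mem_image.mpr ⟨c, hc, hsum⟩)
      rw [hT0, Finset.erase_eq_of_notMem hx, ← hfib, hPcard]
      simp
  have hq1 : ((W.card : ℝ≥0∞))^ℓ * q = 1 := by
    rw [hq, ← mul_pow, ENNReal.mul_inv_cancel (by exact_mod_cast Finset.card_ne_zero.mpr hW)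
      (by simp), one_pow]
  have h2 : ∑ x ∈ J, ν {ω | (∑ i, X i ω) = x} ≤ ν {ω | (∑ i, X i ω) = x₀}
      + ∑ x ∈ J.erase x₀, ν {ω | (∑ i, X i ω) = x} := by
    by_cases hx : x₀ ∈ J
    · rw [← Finset.sum_erase_add J _ hx, add_comm]
    · rw [Finset.erase_eq_of_notMem hx]
      exact le_add_self
  have h3 : ∑ x ∈ J.erase x₀, ν {ω | (∑ i, X i ω) = x} ≤
      ∑ x ∈ J.erase x₀, ((P.filter fun c => ∑ i, c i = x).card : ℝ≥0∞) * q := by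
    refine Finset.sum_le_sum fun x _ => ?_
    exact prob_le ν ℓ W X hind hunif x
  set S := ∑ x ∈ J.erase x₀, ((P.filter fun c => ∑ i, c i = x).card : ℝ≥0∞) * q with hS
  have hSsum : S = ((∑ x ∈ J.erase x₀, (P.filter fun c => ∑ i, c i = x).card : ℕ) : ℝ≥0∞) * q := by
    rw [hS, ← Finset.sum_mul, Nat.cast_sum]
  have hkey1 : ((P.filter fun c => ∑ i, c i = x₀).card : ℝ≥0∞) * q + S ≤ 1 := by
    rw [hSsum, ← add_mul, ← hq1]
    refine mul_le_mul_left ?_ q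
    rw [← Nat.cast_add, ← Nat.cast_pow]
    exact Nat.cast_le.mpr (by rw [Nat.add_comm]; exact hcards)
  have hkey2 : (1:ℝ≥0∞) ≤ ν {ω | (∑ i, X i ω) = x₀} + S :=
    le_trans h1 (le_trans h2 (add_le_add le_rfl h3))
  have hSne : S ≠ ∞ := by
    intro hSt
    rw [hSt] at hkey1
    simp at hkey1
  have := le_trans hkey1 hkey2
  exact (ENNReal.add_le_add_iff_right hSne).mp this

end LRP2
section
open MeasureTheory ProbabilityTheory ENNReal
open LR LR2 LR3 LRP LRP2

/-- Leader–Radcliffe comparison: for `A` a set of `n ≥ 1` distinct integers,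
`Y₁,…,Y_ℓ` independent uniform on `A` with `Y = Y₁+⋯+Y_ℓ`, and `Ỹ₁,…,Ỹ_ℓ` independent
uniform on `{0,…,n−1}` with `Ỹ = Ỹ₁+⋯+Ỹ_ℓ`, one has
`max_x P[Y = x] ≤ max_x P[Ỹ = x]`. -/
theorem stmt_0 (n ℓ : ℕ) (hn : 1 ≤ n) (hℓ : 1 ≤ ℓ)
    (A : Finset ℤ) (hA : A.card = n)
    (Ω : Type) (_ : MeasurableSpace Ω) (μ : Measure Ω) (_ : IsProbabilityMeasure μ)
    (Ω' : Type) (_ : MeasurableSpace Ω') (ν : Measure Ω') (_ : IsProbabilityMeasure ν)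
    (Y : Fin ℓ → Ω → ℤ) (Z : Fin ℓ → Ω' → ℤ)
    (hYind : iIndepFun Y μ)
    (hYunif : ∀ i, ∀ a : ℤ, μ {ω | Y i ω = a} = if a ∈ A then ((A.card : ℝ≥0∞))⁻¹ else 0)
    (hZind : iIndepFun Z ν)
    (hZunif : ∀ i, ∀ a : ℤ, ν {ω | Z i ω = a} =
      if a ∈ Finset.Icc (0 : ℤ) ((n : ℤ) - 1)
        then (((Finset.Icc (0 : ℤ) ((n : ℤ) - 1)).card : ℝ≥0∞))⁻¹ else 0) :
    (⨆ x : ℤ, μ {ω | (∑ i, Y i ω) = x}) ≤ ⨆ x : ℤ, ν {ω | (∑ i, Z i ω) = x} := by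
  classical
  obtain ⟨I, hI⟩ : ∃ I, I = Finset.Icc (0 : ℤ) ((n : ℤ) - 1) := ⟨_, rfl⟩
  simp only [← hI] at hZunif
  have hIcard : I.card = n := by
    rw [hI, Int.card_Icc]
    omega
  obtain ⟨m, hm⟩ : ∃ m, m = ℓ*(n-1)/2 := ⟨_, rfl⟩
  obtain ⟨q, hq⟩ : ∃ q : ℝ≥0∞, q = ((n : ℝ≥0∞))⁻¹ ^ ℓ := ⟨_, rfl⟩
  obtain ⟨e, he⟩ : ∃ e : Fin n ↪o ℤ, e = A.orderEmbOfFin hA := ⟨_, rfl⟩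
  obtain ⟨e', he'⟩ : ∃ e' : ℕ → ℤ, e' = fun k => if h : k < n then e ⟨k, h⟩ else 0 := ⟨_, rfl⟩
  have he'lt : ∀ k (h : k < n), e' k = e ⟨k, h⟩ := by
    intro k h; rw [he']; simp [h]
  obtain ⟨lev, hlev⟩ : ∃ lev : Finset (Fin ℓ → ℕ),
    lev = (Fintype.piFinset fun _ : Fin ℓ => Finset.range n).filter (fun t => rk t = m) :=
    ⟨_, rfl⟩
  obtain ⟨T, hT⟩ : ∃ T : Finset (Fin ℓ → ℤ),
    T = (Fintype.piFinset fun _ : Fin ℓ => I).filter (fun c => ∑ i, c i = (m : ℤ)) := ⟨_, rfl⟩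
  have hlevT : lev.card = T.card := by
    rw [hlev, hT]
    refine Finset.card_bij (fun t _ => fun i => ((t i : ℕ) : ℤ)) ?_ ?_ ?_
    · intro t ht
      rw [Finset.mem_filter, Fintype.mem_piFinset] at ht
      rw [Finset.mem_filter, Fintype.mem_piFinset]
      constructor
      · intro i
        have hti := ht.1 i
        rw [Finset.mem_range] at hti
        show ((t i : ℕ) : ℤ) ∈ I
        rw [hI, Finset.mem_Icc]
        omega
      · show (∑ i, ((t i : ℕ) : ℤ)) = (m : ℤ)
        have h2 := ht.2
        rw [rk] at h2
        rw [← Nat.cast_sum, h2]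
    · intro t ht s hs heq
      have heq' : (fun i => ((t i : ℕ) : ℤ)) = (fun i => ((s i : ℕ) : ℤ)) := heq
      funext i
      have := congrFun heq' i
      exact_mod_cast this
    · intro c hc
      rw [Finset.mem_filter, Fintype.mem_piFinset] at hc
      have hci : ∀ i, 0 ≤ c i ∧ c i ≤ (n:ℤ) - 1 := by
        intro i
        have := hc.1 i
        rw [hI, Finset.mem_Icc] at this
        exact this
      refine ⟨fun i => (c i).toNat, ?_, ?_⟩
      · rw [Finset.mem_filter, Fintype.mem_piFinset]
        constructor
        · intro i
          rw [Finset.mem_range]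
          have := hci i
          omega
        · have hcast : ((∑ i, (c i).toNat : ℕ) : ℤ) = ((m : ℕ) : ℤ) := by
            rw [Nat.cast_sum, ← hc.2]
            refine Finset.sum_congr rfl fun i _ => ?_
            have := hci i
            omega
          rw [rk]
          exact_mod_cast hcast
      · show (fun i => (((c i).toNat : ℕ) : ℤ)) = c
        funext i
        have := hci i
        omega
  -- antichain bound for each fiber of the `A`-sums
  have hfiber : ∀ x : ℤ,
      (((Fintype.piFinset fun _ : Fin ℓ => A).filter fun c => ∑ i, c i = x).card) ≤ T.card := by
    intro x
    obtain ⟨Bx, hBx⟩ : ∃ Bx : Finset (Fin ℓ → ℕ),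
      Bx = (Fintype.piFinset fun _ : Fin ℓ => Finset.range n).filter
        (fun t => ∑ i, e' (t i) = x) := ⟨_, rfl⟩
    have hcardeq : Bx.card
        = ((Fintype.piFinset fun _ : Fin ℓ => A).filter fun c => ∑ i, c i = x).card := by
      rw [hBx]
      refine Finset.card_bij (fun t _ => fun i => e' (t i)) ?_ ?_ ?_
      · intro t ht
        rw [Finset.mem_filter, Fintype.mem_piFinset] at ht
        rw [Finset.mem_filter, Fintype.mem_piFinset]
        refine ⟨fun i => ?_, ht.2⟩
        have hti : t i < n := by have := ht.1 i; rwa [Finset.mem_range] at this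
        show e' (t i) ∈ A
        rw [he'lt _ hti, he]
        exact Finset.orderEmbOfFin_mem A hA _
      · intro t ht s hs heq
        rw [Finset.mem_filter, Fintype.mem_piFinset] at ht hs
        have heq' : (fun i => e' (t i)) = (fun i => e' (s i)) := heq
        funext i
        have hti : t i < n := by have := ht.1 i; rwa [Finset.mem_range] at this
        have hsi : s i < n := by have := hs.1 i; rwa [Finset.mem_range] at this
        have hei := congrFun heq' i
        rw [he'lt _ hti, he'lt _ hsi] at hei
        exact congrArg Fin.val (e.injective hei)
      · intro c hc
        rw [Finset.mem_filter, Fintype.mem_piFinset] at hc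
        have hex : ∀ i, ∃ k : Fin n, e k = c i := by
          intro i
          have hmem : c i ∈ (A : Set ℤ) := hc.1 i
          rw [← Finset.range_orderEmbOfFin A hA, ← he] at hmem
          exact hmem
        choose g hg using hex
        refine ⟨fun i => (g i : ℕ), ?_, ?_⟩
        · rw [Finset.mem_filter, Fintype.mem_piFinset]
          constructor
          · intro i
            rw [Finset.mem_range]
            exact (g i).isLt
          · rw [← hc.2]
            refine Finset.sum_congr rfl fun i _ => ?_
            rw [he'lt _ (g i).isLt, Fin.eta]
            exact hg i
        · show (fun i => e' ((g i : ℕ))) = c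
          funext i
          rw [he'lt _ (g i).isLt, Fin.eta]
          exact hg i
    have hBlev : Bx.card ≤ lev.card := by
      rw [hlev, hm]
      refine LR3.antichain_card_le n ℓ Bx ?_ ?_
      · intro t ht
        rw [hBx, Finset.mem_filter, Fintype.mem_piFinset] at ht
        intro i
        have := ht.1 i
        rwa [Finset.mem_range] at this
      · intro t ht s hs hts
        rw [hBx, Finset.mem_filter, Fintype.mem_piFinset] at ht hs
        have hterm : ∀ i : Fin ℓ, (0:ℤ) ≤ e' (s i) - e' (t i) := by
          intro i
          have hti : t i < n := by have := ht.1 i; rwa [Finset.mem_range] at this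
          have hsi : s i < n := by have := hs.1 i; rwa [Finset.mem_range] at this
          have hmono : e ⟨t i, hti⟩ ≤ e ⟨s i, hsi⟩ := by
            apply e.monotone
            rw [Fin.mk_le_mk]
            exact hts i
          rw [he'lt _ hti, he'lt _ hsi]
          exact sub_nonneg.mpr hmono
        have hzero : ∑ i : Fin ℓ, (e' (s i) - e' (t i)) = 0 := by
          rw [Finset.sum_sub_distrib, ht.2, hs.2]
          ring
        have hall := (Finset.sum_eq_zero_iff_of_nonneg (fun i _ => hterm i)).mp hzero
        funext i
        have hI0 := hall i (Finset.mem_univ i)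
        have hti : t i < n := by have := ht.1 i; rwa [Finset.mem_range] at this
        have hsi : s i < n := by have := hs.1 i; rwa [Finset.mem_range] at this
        have heq : e ⟨t i, hti⟩ = e ⟨s i, hsi⟩ := by
          rw [he'lt _ hti, he'lt _ hsi] at hI0
          exact (sub_eq_zero.mp hI0).symm
        exact congrArg Fin.val (e.injective heq)
    rw [← hcardeq, ← hlevT]
    exact hBlev
  -- RHS lower bound at the middle value
  have hge : (T.card : ℝ≥0∞) * q ≤ ν {ω | (∑ i, Z i ω) = (m : ℤ)} := by
    have hne : I.Nonempty := by
      rw [← Finset.card_pos, hIcard]; omega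
    have hgoal := LRP2.prob_ge ν ℓ I hne Z hZind hZunif (m : ℤ)
    rw [hIcard] at hgoal
    rw [hT, hq]
    exact hgoal
  refine iSup_le fun x => ?_
  have hle := LRP.prob_le μ ℓ A Y hYind hYunif x
  rw [hA] at hle
  calc μ {ω | (∑ i, Y i ω) = x}
      ≤ (((Fintype.piFinset fun _ : Fin ℓ => A).filter fun c => ∑ i, c i = x).card : ℝ≥0∞)
        * ((n : ℝ≥0∞))⁻¹ ^ ℓ := hle
    _ = (((Fintype.piFinset fun _ : Fin ℓ => A).filter fun c => ∑ i, c i = x).card : ℝ≥0∞)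
        * q := by rw [hq]
    _ ≤ (T.card : ℝ≥0∞) * q := by
        refine mul_le_mul_left ?_ q
        exact Nat.cast_le.mpr (hfiber x)
    _ ≤ ν {ω | (∑ i, Z i ω) = (m : ℤ)} := hge
    _ ≤ ⨆ x : ℤ, ν {ω | (∑ i, Z i ω) = x} := le_iSup (fun x : ℤ => ν {ω | (∑ i, Z i ω) = x}) _

end
end

section
/- Let A be a set of n ≥ 1 distinct integers, and let Y₁, Y₂, Y₃ be independent random variables each uniformly distributed on A. Setting Y = Y₁ + Y₂ + Y₃, one has P[Y = x] ≤ (3 + 1/n²) / (4n) for every x ∈ ℤ. -/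
open Finset

lemma odd_sum (q : ℕ) : ∑ j ∈ Finset.range q, (2*j+1) = q^2 := by
  induction q with
  | zero => simp
  | succ q ih => rw [Finset.sum_range_succ, ih]; ring

lemma min_sum_bound (n : ℕ) : 4 * (∑ j ∈ Finset.range n, min n (2*j+1)) ≤ 3*n^2+1 := by
  set q := (n+1)/2 with hq
  have hqn : q ≤ n ∧ n ≤ 2*q ∧ 2*q ≤ n+1 := by omega
  obtain ⟨h1, h2, h3⟩ := hqn
  have hsplit : ∑ j ∈ Finset.range n, min n (2*j+1)
      = ∑ j ∈ Finset.Ico 0 q, min n (2*j+1) + ∑ j ∈ Finset.Ico q n, min n (2*j+1) := by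
    rw [Finset.sum_Ico_consecutive _ (Nat.zero_le q) h1, Finset.range_eq_Ico]
  have e1 : ∑ j ∈ Finset.Ico 0 q, min n (2*j+1) = q^2 := by
    rw [← Finset.range_eq_Ico, ← odd_sum q]
    apply Finset.sum_congr rfl
    intro j hj
    simp only [Finset.mem_range] at hj
    have : 2*j+1 ≤ n := by omega
    omega
  have e2 : ∑ j ∈ Finset.Ico q n, min n (2*j+1) = (n - q) * n := by
    rw [Finset.sum_congr rfl (fun j hj => ?_), Finset.sum_const, Nat.card_Ico, smul_eq_mul]
    simp only [Finset.mem_Ico] at hj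
    have : n ≤ 2*j+1 := by omega
    omega
  rw [hsplit, e1, e2]
  zify [h1]
  have h2' : (n:ℤ) ≤ 2*q := by exact_mod_cast h2
  have h3' : 2*(q:ℤ) ≤ n+1 := by exact_mod_cast h3
  nlinarith [h2', h3']

lemma triple_count (n : ℕ) (e : Fin n → ℤ) (hmono : StrictMono e) (x : ℤ)
    (T : Finset (Fin n × Fin n))
    (hT : ∀ p ∈ T, ∃ k : Fin n, e k = x - e p.1 - e p.2) :
    4 * T.card ≤ 3 * n^2 + 1 := by
  classical
  set chainIdx : Fin n × Fin n → ℕ :=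
    fun p => if p.1.val + p.2.val ≤ n - 1 then p.2.val else n - 1 - p.1.val with hci
  have hmem : ∀ p ∈ T, chainIdx p ∈ Finset.range n := by
    intro p _
    have h1 := p.1.isLt; have h2 := p.2.isLt
    simp only [hci, Finset.mem_range]
    split_ifs <;> omega
  have hfib := Finset.card_eq_sum_card_fiberwise hmem
  -- comparability within a chain
  have hcomp : ∀ p p' : Fin n × Fin n, chainIdx p = chainIdx p' →
      (p.1.val ≤ p'.1.val ∧ p.2.val ≤ p'.2.val) ∨
      (p'.1.val ≤ p.1.val ∧ p'.2.val ≤ p.2.val) := by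
    intro p p' h
    have h1 := p.1.isLt; have h2 := p.2.isLt
    have h3 := p'.1.isLt; have h4 := p'.2.isLt
    simp only [hci] at h
    split_ifs at h <;> omega
  -- fiber bound 1 : at most n
  have hb1 : ∀ m, (T.filter fun p => chainIdx p = m).card ≤ n := by
    intro m
    have : (T.filter fun p => chainIdx p = m).card ≤ (Finset.univ.image e).card := by
      apply Finset.card_le_card_of_injOn (fun p => x - e p.1 - e p.2)
      · intro p hp
        simp only [Finset.mem_coe, Finset.mem_filter] at hp
        obtain ⟨k, hk⟩ := hT p hp.1
        exact Finset.mem_image.2 ⟨k, Finset.mem_univ k, hk⟩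
      · intro p hp p' hp' hval
        simp only [Finset.mem_coe, Finset.mem_filter] at hp hp'
        simp only at hval
        have hsum : e p.1 + e p.2 = e p'.1 + e p'.2 := by linarith
        have key : ∀ q q' : Fin n × Fin n, q.1.val ≤ q'.1.val → q.2.val ≤ q'.2.val →
            e q.1 + e q.2 = e q'.1 + e q'.2 → q = q' := by
          intro q q' ha hb hs
          have ha' : e q.1 ≤ e q'.1 := hmono.le_iff_le.2 (Fin.le_def.mpr ha)
          have hb' : e q.2 ≤ e q'.2 := hmono.le_iff_le.2 (Fin.le_def.mpr hb)
          have h1 : e q.1 = e q'.1 := le_antisymm ha' (by linarith)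
          have h2 : e q.2 = e q'.2 := le_antisymm hb' (by linarith)
          exact Prod.ext (hmono.injective h1) (hmono.injective h2)
        rcases hcomp p p' (hp.2.trans hp'.2.symm) with ⟨ha, hb⟩ | ⟨ha, hb⟩
        · exact key p p' ha hb hsum
        · exact (key p' p ha hb hsum.symm).symm
    calc (T.filter fun p => chainIdx p = m).card ≤ (Finset.univ.image e).card := this
      _ ≤ (Finset.univ : Finset (Fin n)).card := Finset.card_image_le
      _ = n := by simp
  -- fiber bound 2 : at most chain length
  have hb2 : ∀ m, (T.filter fun p => chainIdx p = m).card ≤ 2*(n-1-m)+1 := by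
    intro m
    have : (T.filter fun p => chainIdx p = m).card ≤ (Finset.range (2*(n-1-m)+1)).card := by
      apply Finset.card_le_card_of_injOn (fun p => p.1.val + p.2.val - m)
      · intro p hp
        simp only [Finset.mem_coe, Finset.mem_filter] at hp
        have hpm := hp.2
        have h1 := p.1.isLt; have h2 := p.2.isLt
        simp only [hci] at hpm
        simp only [Finset.mem_coe, Finset.mem_range]
        split_ifs at hpm <;> omega
      · intro p hp p' hp' hval
        simp only [Finset.mem_coe, Finset.mem_filter] at hp hp'
        have hpm := hp.2; have hpm' := hp'.2
        have h1 := p.1.isLt; have h2 := p.2.isLt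
        have h3 := p'.1.isLt; have h4 := p'.2.isLt
        simp only [hci] at hpm hpm'
        have : p.1.val = p'.1.val ∧ p.2.val = p'.2.val := by
          simp only at hval
          split_ifs at hpm hpm' <;> omega
        exact Prod.ext (Fin.ext this.1) (Fin.ext this.2)
    simpa using this
  have hbmin : ∀ m ∈ Finset.range n,
      (T.filter fun p => chainIdx p = m).card ≤ min n (2*(n-1-m)+1) :=
    fun m _ => le_min (hb1 m) (hb2 m)
  have hsum : T.card ≤ ∑ m ∈ Finset.range n, min n (2*(n-1-m)+1) := by
    rw [hfib]; exact Finset.sum_le_sum hbmin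
  have hrefl : ∑ m ∈ Finset.range n, min n (2*(n-1-m)+1)
      = ∑ j ∈ Finset.range n, min n (2*j+1) :=
    Finset.sum_range_reflect (fun j => min n (2*j+1)) n
  have := min_sum_bound n
  omega


open MeasureTheory ProbabilityTheory ENNReal

/-- Let `A` be a set of `n ≥ 1` distinct integers and `Y₁, Y₂, Y₃` independent
uniform on `A`. Setting `Y = Y₁ + Y₂ + Y₃`, one has `P[Y = x] ≤ (3 + 1/n²)/(4n)` for all `x`. -/
theorem stmt_3 (n : ℕ) (hn : 1 ≤ n) (A : Finset ℤ) (hA : A.card = n)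
    (Ω : Type) (_ : MeasurableSpace Ω) (μ : Measure Ω) (_ : IsProbabilityMeasure μ)
    (Y : Fin 3 → Ω → ℤ)
    (hind : iIndepFun Y μ)
    (hunif : ∀ i, ∀ a : ℤ, μ {ω | Y i ω = a} = if a ∈ A then ((A.card : ℝ≥0∞))⁻¹ else 0) :
    ∀ x : ℤ, μ {ω | Y 0 ω + Y 1 ω + Y 2 ω = x} ≤
      ENNReal.ofReal ((3 + 1 / (n : ℝ) ^ 2) / (4 * n)) := by
  intro x
  classical
  set e : Fin n → ℤ := (A.orderEmbOfFin hA : Fin n → ℤ) with he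
  have hmemA : ∀ i, e i ∈ A := fun i => A.orderEmbOfFin_mem hA i
  have hsurj : ∀ a ∈ A, ∃ i, e i = a := by
    intro a ha
    have : a ∈ Set.range (A.orderEmbOfFin hA) := by
      rw [Finset.range_orderEmbOfFin]; exact_mod_cast ha
    exact this
  set E : Fin n × Fin n → Set Ω := fun p =>
    ({ω | Y 0 ω = e p.1} ∩ {ω | Y 1 ω = e p.2}) ∩ {ω | Y 2 ω = x - e p.1 - e p.2} with hE
  have hnull : ∀ i, μ {ω | Y i ω ∉ A} = 0 := by
    intro i
    have hset : {ω | Y i ω ∉ A} = ⋃ a : {a : ℤ // a ∉ A}, {ω | Y i ω = a.1} := by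
      ext ω; simp
    rw [hset]
    refine measure_iUnion_null fun a => ?_
    rw [hunif i a.1, if_neg a.2]
  have hcover : {ω | Y 0 ω + Y 1 ω + Y 2 ω = x} ⊆
      (⋃ p : Fin n × Fin n, E p) ∪ ({ω | Y 0 ω ∉ A} ∪ {ω | Y 1 ω ∉ A}) := by
    intro ω hω
    by_cases h0 : Y 0 ω ∈ A
    · by_cases h1 : Y 1 ω ∈ A
      · left
        obtain ⟨i, hi⟩ := hsurj _ h0
        obtain ⟨j, hj⟩ := hsurj _ h1
        refine Set.mem_iUnion.2 ⟨(i, j), ⟨⟨hi.symm, hj.symm⟩, ?_⟩⟩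
        have : Y 0 ω + Y 1 ω + Y 2 ω = x := hω
        simp only [Set.mem_setOf_eq]
        omega
      · right; right; exact h1
    · right; left; exact h0
  -- product formula for elementary events
  have hprod : ∀ p : Fin n × Fin n, μ (E p) =
      (n:ℝ≥0∞)⁻¹ * ((n:ℝ≥0∞)⁻¹ * (if x - e p.1 - e p.2 ∈ A then (n:ℝ≥0∞)⁻¹ else 0)) := by
    intro p
    set v : Fin 3 → ℤ := ![e p.1, e p.2, x - e p.1 - e p.2] with hv
    set s : Fin 3 → Set Ω := fun i => Y i ⁻¹' {v i} with hs
    have hms : ∀ i, MeasurableSet[(inferInstance : MeasurableSpace ℤ).comap (Y i)] (s i) :=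
      fun i => ⟨{v i}, measurableSet_singleton _, rfl⟩
    have hmeas := hind.meas_iInter hms
    have hEeq : E p = ⋂ i, s i := by
      ext ω
      simp only [hE, hs, hv, Set.mem_iInter, Set.mem_inter_iff, Set.mem_setOf_eq,
        Set.mem_preimage, Set.mem_singleton_iff, Fin.forall_fin_succ, Fin.forall_fin_zero_pi]
      simp [Matrix.cons_val_zero, Matrix.cons_val_one]
      tauto
    rw [hEeq, hmeas, Fin.prod_univ_three]
    have hμs : ∀ i, μ (s i) = if v i ∈ A then (n:ℝ≥0∞)⁻¹ else 0 := by
      intro i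
      have : s i = {ω | Y i ω = v i} := rfl
      rw [this, hunif i (v i), hA]
    rw [hμs 0, hμs 1, hμs 2]
    have h0 : v 0 ∈ A := hmemA p.1
    have h1 : v 1 ∈ A := hmemA p.2
    rw [if_pos h0, if_pos h1, mul_assoc]
    have hv2 : v 2 = x - e p.1 - e p.2 := rfl
    rw [hv2]
  -- sum over all p
  set T : Finset (Fin n × Fin n) :=
    Finset.univ.filter (fun p => x - e p.1 - e p.2 ∈ A) with hT
  have hsum : ∑ p : Fin n × Fin n, μ (E p)
      = (T.card : ℝ≥0∞) * ((n:ℝ≥0∞)⁻¹)^3 := by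
    calc ∑ p : Fin n × Fin n, μ (E p)
        = ∑ p : Fin n × Fin n,
            (if x - e p.1 - e p.2 ∈ A then ((n:ℝ≥0∞)⁻¹)^3 else 0) := by
          refine Finset.sum_congr rfl fun p _ => ?_
          rw [hprod p]
          split_ifs with h
          · ring
          · simp
      _ = ∑ _p ∈ T, ((n:ℝ≥0∞)⁻¹)^3 := (Finset.sum_filter _ _).symm
      _ = (T.card : ℝ≥0∞) * ((n:ℝ≥0∞)⁻¹)^3 := by
          rw [Finset.sum_const, nsmul_eq_mul]
  have hfinal : μ {ω | Y 0 ω + Y 1 ω + Y 2 ω = x}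
      ≤ (T.card : ℝ≥0∞) * ((n:ℝ≥0∞)⁻¹)^3 := by
    refine (measure_mono hcover).trans ?_
    refine (measure_union_le _ _).trans ?_
    have h0 : μ ({ω | Y 0 ω ∉ A} ∪ {ω | Y 1 ω ∉ A}) = 0 :=
      measure_union_null (hnull 0) (hnull 1)
    rw [h0, add_zero]
    exact (measure_iUnion_fintype_le μ E).trans (le_of_eq hsum)
  -- the combinatorial bound
  have hcount : 4 * T.card ≤ 3 * n^2 + 1 := by
    refine triple_count n e (A.orderEmbOfFin hA).strictMono x T (fun p hp => ?_)
    exact hsurj _ (Finset.mem_filter.1 hp).2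
  -- arithmetic conclusion
  have hnR : (0:ℝ) < (n:ℝ) := by exact_mod_cast Nat.pos_of_ne_zero (by omega)
  have hR : ENNReal.ofReal ((3 + 1 / (n : ℝ) ^ 2) / (4 * n))
      = ((3*n^2+1 : ℕ) : ℝ≥0∞) / ((4*n^3 : ℕ) : ℝ≥0∞) := by
    have hre : (3 + 1 / (n : ℝ) ^ 2) / (4 * n) = ((3*n^2+1 : ℕ):ℝ) / ((4*n^3:ℕ):ℝ) := by
      rw [div_eq_div_iff (by positivity) (by positivity)]
      push_cast
      field_simp
    rw [hre, ENNReal.ofReal_div_of_pos (by positivity), ENNReal.ofReal_natCast,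
      ENNReal.ofReal_natCast]
  rw [hR]
  refine hfinal.trans ?_
  have h4 : ((4*n^3 : ℕ) : ℝ≥0∞) = 4 * ((n:ℝ≥0∞))^3 := by push_cast; ring
  rw [h4]
  have hL : (T.card : ℝ≥0∞) * ((n:ℝ≥0∞)⁻¹)^3
      = (4 * (T.card:ℝ≥0∞)) / (4 * ((n:ℝ≥0∞))^3) := by
    rw [← ENNReal.inv_pow, ← div_eq_mul_inv,
      ENNReal.mul_div_mul_left _ _ (by norm_num) (by norm_num)]
  rw [hL]
  refine ENNReal.div_le_div_right ?_ _
  have : ((4 * T.card : ℕ) : ℝ≥0∞) ≤ ((3*n^2+1 : ℕ) : ℝ≥0∞) := by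
    exact_mod_cast hcount
  calc 4 * (T.card:ℝ≥0∞) = ((4 * T.card : ℕ) : ℝ≥0∞) := by push_cast; ring
    _ ≤ ((3*n^2+1 : ℕ) : ℝ≥0∞) := this
end

section
/- Let n be an odd positive integer, let A = {1, 2, …, n}, and let M = (3n+3)/2 (that is, M = ⌊3(n+1)/2⌋ for odd n). Then the number of ordered triples (y₁, y₂, y₃) ∈ A³ with y₁ + y₂ + y₃ = M equals (3n² + 1)/4. -/
/-- For `n` an odd positive integer, `A = {1,…,n}` and `M = (3n+3)/2`, the
number of ordered triples `(y₁,y₂,y₃) ∈ A³` with `y₁+y₂+y₃ = M` equals `(3n²+1)/4`. -/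
theorem stmt_4 (n : ℕ) (hn : 0 < n) (hodd : Odd n) :
    ((Finset.Icc 1 n ×ˢ Finset.Icc 1 n ×ˢ Finset.Icc 1 n).filter
      (fun t => t.1 + t.2.1 + t.2.2 = (3 * n + 3) / 2)).card = (3 * n ^ 2 + 1) / 4 := by
  obtain ⟨m, rfl⟩ := hodd
  have hM : (3 * (2 * m + 1) + 3) / 2 = 3 * m + 3 := by omega
  rw [hM]
  have hR : (3 * (2 * m + 1) ^ 2 + 1) / 4 = 3 * m ^ 2 + 3 * m + 1 := by
    have h4 : 3 * (2 * m + 1) ^ 2 + 1 = (3 * m ^ 2 + 3 * m + 1) * 4 := by ring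
    rw [h4, Nat.mul_div_cancel _ (by norm_num)]
  rw [hR]
  set n := 2 * m + 1 with hn'
  rw [Finset.card_filter, Finset.sum_product]
  -- rewrite each outer summand as an interval length
  have key : ∀ a ∈ Finset.Icc 1 n,
      (∑ x ∈ Finset.Icc 1 n ×ˢ Finset.Icc 1 n,
        if a + x.1 + x.2 = 3 * m + 3 then 1 else 0) =
      (min n (3 * m + 2 - a) + 1 - max 1 (m + 2 - a)) := by
    intro a ha
    rw [Finset.sum_product]
    have inner : ∀ b ∈ Finset.Icc 1 n,
        (∑ c ∈ Finset.Icc 1 n, if a + b + c = 3 * m + 3 then 1 else 0) =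
        if a + b + 1 ≤ 3 * m + 3 ∧ 3 * m + 3 ≤ a + b + n then 1 else 0 := by
      intro b hb
      rw [← Finset.card_filter]
      by_cases h : a + b + 1 ≤ 3 * m + 3 ∧ 3 * m + 3 ≤ a + b + n
      · rw [if_pos h]
        have hs : Finset.filter (fun c => a + b + c = 3 * m + 3) (Finset.Icc 1 n)
            = {3 * m + 3 - (a + b)} := by
          ext c; simp only [Finset.mem_filter, Finset.mem_Icc, Finset.mem_singleton]; omega
        rw [hs, Finset.card_singleton]
      · rw [if_neg h]
        have hs : Finset.filter (fun c => a + b + c = 3 * m + 3) (Finset.Icc 1 n) = ∅ := by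
          ext c; simp only [Finset.mem_filter, Finset.mem_Icc, Finset.notMem_empty, iff_false]
          omega
        rw [hs, Finset.card_empty]
    rw [Finset.sum_congr rfl inner, ← Finset.card_filter]
    have hs : Finset.filter (fun b => a + b + 1 ≤ 3 * m + 3 ∧ 3 * m + 3 ≤ a + b + n)
        (Finset.Icc 1 n) = Finset.Icc (max 1 (m + 2 - a)) (min n (3 * m + 2 - a)) := by
      ext b; simp only [Finset.mem_filter, Finset.mem_Icc, max_le_iff, le_min_iff,
        le_max_iff, min_le_iff]
      omega
    rw [hs, Nat.card_Icc]
  rw [Finset.sum_congr rfl key]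
  -- now a pure sum computation
  have hsplit : Finset.Icc 1 n = Finset.Ioc 0 n := by
    ext x; simp [Nat.lt_iff_add_one_le]
  rw [hsplit, ← Finset.sum_Ioc_consecutive _ (Nat.zero_le (m+1)) (by omega : m + 1 ≤ n)]
  have h1 : ∑ a ∈ Finset.Ioc 0 (m+1), (min n (3 * m + 2 - a) + 1 - max 1 (m + 2 - a))
      = ∑ a ∈ Finset.Ioc 0 (m+1), (m + a) := by
    apply Finset.sum_congr rfl
    intro a ha
    simp only [Finset.mem_Ioc] at ha
    have e1 : min n (3 * m + 2 - a) = n := by omega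
    have e2 : max 1 (m + 2 - a) = m + 2 - a := by omega
    rw [e1, e2]; omega
  have h2 : ∑ a ∈ Finset.Ioc (m+1) n, (min n (3 * m + 2 - a) + 1 - max 1 (m + 2 - a))
      = ∑ a ∈ Finset.Ioc (m+1) n, (3 * m + 2 - a) := by
    apply Finset.sum_congr rfl
    intro a ha
    simp only [Finset.mem_Ioc] at ha
    have e1 : min n (3 * m + 2 - a) = 3 * m + 2 - a := by omega
    have e2 : max 1 (m + 2 - a) = 1 := by omega
    rw [e1, e2]; omega
  rw [h1, h2]
  -- first sum
  have hA : ∑ a ∈ Finset.Ioc 0 (m+1), (m + a)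
      = (m+1) * m + ∑ a ∈ Finset.Ioc 0 (m+1), a := by
    rw [Finset.sum_add_distrib, Finset.sum_const, Nat.card_Ioc]
    simp [mul_comm]
  -- second sum via reflection
  have hB : ∑ a ∈ Finset.Ioc (m+1) n, (3 * m + 2 - a) = ∑ b ∈ Finset.Ioc m (2*m), b := by
    apply Finset.sum_nbij' (fun a => 3*m+2-a) (fun b => 3*m+2-b)
    all_goals (intro a ha; simp only [Finset.mem_Ioc, hn'] at *; try omega)
  rw [hA, hB]
  -- Gauss sums
  have ioc_range : ∀ k : ℕ, ∑ a ∈ Finset.Ioc 0 k, a = ∑ a ∈ Finset.range (k+1), a := by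
    intro k
    have h : Finset.range (k+1) = insert 0 (Finset.Ioc 0 k) := by
      ext x; simp only [Finset.mem_range, Finset.mem_insert, Finset.mem_Ioc]; omega
    rw [h, Finset.sum_insert (by simp), zero_add]
  have hcons : ∑ a ∈ Finset.Ioc 0 m, a + ∑ a ∈ Finset.Ioc m (2*m), a
      = ∑ a ∈ Finset.Ioc 0 (2*m), a :=
    Finset.sum_Ioc_consecutive _ (Nat.zero_le m) (by omega)
  have g1 := Finset.sum_range_id_mul_two (m+2)
  have g2 := Finset.sum_range_id_mul_two (2*m+1)
  have g3 := Finset.sum_range_id_mul_two (m+1)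
  rw [ioc_range (m+1)] at *
  have efix : ∑ a ∈ Finset.range (m+1+1), a = ∑ i ∈ Finset.range (m+2), i := rfl
  rw [efix]
  rw [ioc_range m, ioc_range (2*m)] at hcons
  have p1 : (m+2) * (m+2-1) = m*m + 3*m + 2 := by
    have : m+2-1 = m+1 := rfl
    rw [this]; ring
  have p2 : (2*m+1) * (2*m+1-1) = 4*(m*m) + 2*m := by
    have : 2*m+1-1 = 2*m := rfl
    rw [this]; ring
  have p3 : (m+1) * (m+1-1) = m*m + m := by
    have : m+1-1 = m := rfl
    rw [this]; ring
  rw [p1] at g1; rw [p2] at g2; rw [p3] at g3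
  have pg : (m+1) * m = m*m + m := by ring
  have pr : 3 * m ^ 2 + 3 * m + 1 = 3*(m*m) + 3*m + 1 := by ring
  rw [pg, pr]
  generalize m*m = q at *
  omega
end

section
/- Let k ≥ 1 be an integer, let A be a subset of ℤ_k := ℤ/kℤ of cardinality n, and suppose every prime factor of k is greater than n^n. Then for every positive integer ℓ ≤ n there exist a subset B of ℤ and a map φ : A → B that is a Freiman isomorphism of order ℓ from A to B. -/
open Finset

/-- Rows of "incidence type". -/
def RowOK {s : ℕ} (v : Fin s → ℤ) : Prop :=
  ∃ (p q : Fin s) (α β : ℤ), (α = 0 ∨ α = 1) ∧ (β = 0 ∨ β = -1) ∧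
    v = Pi.single p α + Pi.single q β

lemma single_comp_succAbove {s : ℕ} (x : Fin s) (p₀ : Fin (s+1)) (p : Fin (s+1)) (α : ℤ) :
    ∃ (p' : Fin s) (α' : ℤ), (α' = α ∨ α' = 0) ∧
      (Pi.single p α : Fin (s+1) → ℤ) ∘ p₀.succAbove = Pi.single p' α' := by
  by_cases h : p = p₀
  · refine ⟨x, 0, Or.inr rfl, ?_⟩
    funext y
    have : p₀.succAbove y ≠ p := by rw [h]; exact Fin.succAbove_ne p₀ y
    simp [Pi.single_apply, this]
  · obtain ⟨j, hj⟩ := Fin.exists_succAbove_eq h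
    refine ⟨j, α, Or.inl rfl, ?_⟩
    funext y
    have : p₀.succAbove y = p ↔ y = j := by
      constructor
      · intro hy; exact Fin.succAbove_right_injective (by rw [hy, hj])
      · rintro rfl; exact hj
    simp [Pi.single_apply, this]

lemma tu_det : ∀ (s : ℕ) (M : Matrix (Fin s) (Fin s) ℤ), (∀ j, RowOK (M j)) → |M.det| ≤ 1 := by
  intro s
  induction s with
  | zero => intro M _; simp [Matrix.det_isEmpty]
  | succ s ih =>
    intro M hM
    by_cases hall : ∀ j, ∑ c, M j c = 0
    · have hdet : M.det = 0 := by
        rw [← Matrix.exists_mulVec_eq_zero_iff]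
        refine ⟨1, ?_, ?_⟩
        · intro h
          exact one_ne_zero (congrFun h 0)
        · funext j
          simpa [Matrix.mulVec, dotProduct] using hall j
      simp [hdet]
    · push_neg at hall
      obtain ⟨j₀, hj₀⟩ := hall
      obtain ⟨p, q, α, β, hα, hβ, hrow⟩ := hM j₀
      have hsum : ∑ c, M j₀ c = α + β := by
        rw [hrow]
        simp [Finset.sum_add_distrib]
      rw [hsum] at hj₀
      -- extract single form
      obtain ⟨p₀, c₀, hc₀, hrow₀⟩ :
          ∃ (p₀ : Fin (s+1)) (c₀ : ℤ), (c₀ = 1 ∨ c₀ = -1) ∧ M j₀ = Pi.single p₀ c₀ := by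
        rcases hα with rfl | rfl <;> rcases hβ with rfl | rfl
        · exact absurd rfl hj₀
        · exact ⟨q, -1, Or.inr rfl, by rw [hrow]; simp⟩
        · exact ⟨p, 1, Or.inl rfl, by rw [hrow]; simp⟩
        · exact absurd (by ring) hj₀
      have hexp := Matrix.det_succ_row M j₀
      have hcollapse : M.det = (-1 : ℤ) ^ (j₀ + p₀ : ℕ) * c₀ *
          (M.submatrix j₀.succAbove p₀.succAbove).det := by
        rw [hexp]
        rw [Finset.sum_eq_single p₀]
        · rw [hrow₀]; simp
        · intro j _ hj
          rw [hrow₀]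
          simp [Pi.single_apply, hj.symm]  -- M j₀ j = 0
        · intro h; exact absurd (Finset.mem_univ _) h
      have hminor : ∀ j' : Fin s, RowOK ((M.submatrix j₀.succAbove p₀.succAbove) j') := by
        intro j'
        obtain ⟨p', q', α', β', hα', hβ', hr⟩ := hM (j₀.succAbove j')
        have : (M.submatrix j₀.succAbove p₀.succAbove) j' = (M (j₀.succAbove j')) ∘ p₀.succAbove := rfl
        rw [this, hr]
        obtain ⟨pa, αa, hαa, ha⟩ := single_comp_succAbove j' p₀ p' α'
        obtain ⟨pb, βb, hβb, hb⟩ := single_comp_succAbove j' p₀ q' β'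
        refine ⟨pa, pb, αa, βb, ?_, ?_, ?_⟩
        · rcases hαa with rfl | rfl
          · exact hα'
          · exact Or.inl rfl
        · rcases hβb with rfl | rfl
          · exact hβ'
          · exact Or.inl rfl
        · funext y
          have := congrFun ha y
          have := congrFun hb y
          simp only [Pi.add_apply, Function.comp_apply] at *
          omega
      have := ih _ hminor
      rw [hcollapse, abs_mul, abs_mul, abs_pow, abs_neg, abs_one, one_pow, one_mul]
      have hc : |c₀| = 1 := by rcases hc₀ with rfl | rfl <;> simp
      rw [hc, one_mul]
      exact this

lemma flow_decomp {ι : Type*} [Fintype ι] [DecidableEq ι] :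
    ∀ (N : ℕ) (w : ι → ℤ), (∑ i, |w i|).toNat = N → ∑ i, w i = 0 →
    ∃ (m : ℕ) (P Q : Fin m → ι), 2 * (m : ℤ) = ∑ i, |w i| ∧
      w = ∑ t, (Pi.single (P t) 1 - Pi.single (Q t) 1) := by
  intro N
  induction N using Nat.strong_induction_on with
  | _ N ih =>
    intro w hN h0
    by_cases hw : w = 0
    · refine ⟨0, Fin.elim0, Fin.elim0, ?_, ?_⟩
      · simp [hw]
      · simp [hw]
    · have hex : ∃ p, 0 < w p := by
        by_contra h
        push_neg at h
        have : ∀ i ∈ Finset.univ, w i = 0 := by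
          intro i _
          have := (Finset.sum_eq_zero_iff_of_nonpos (fun i _ => h i)).mp h0 i (Finset.mem_univ i)
          exact this
        exact hw (funext fun i => this i (Finset.mem_univ i))
      have hex' : ∃ q, w q < 0 := by
        by_contra h
        push_neg at h
        have : ∀ i ∈ Finset.univ, w i = 0 :=
          (Finset.sum_eq_zero_iff_of_nonneg (fun i _ => h i)).mp h0
        exact hw (funext fun i => this i (Finset.mem_univ i))
      obtain ⟨p, hp⟩ := hex
      obtain ⟨q, hq⟩ := hex'
      have hpq : p ≠ q := fun h => by rw [h] at hp; omega
      set w' : ι → ℤ := w - (Pi.single p 1 - Pi.single q 1) with hw'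
      have habs : ∀ i, |w' i| = |w i| - (if i = p then 1 else 0) - (if i = q then 1 else 0) := by
        intro i
        have hvi : w' i = w i - (if i = p then 1 else 0) + (if i = q then 1 else 0) := by
          simp only [hw', Pi.sub_apply, Pi.single_apply]
          ring
        by_cases hip : i = p
        · subst hip
          simp only [hvi, eq_self_iff_true, if_true, if_neg hpq]
          rw [abs_of_pos hp, abs_of_nonneg (by omega : (0:ℤ) ≤ w i - 1 + 0)]
          ring
        · by_cases hiq : i = q
          · subst hiq
            simp only [hvi, eq_self_iff_true, if_true, if_neg hip]
            rw [abs_of_neg hq, abs_of_nonpos (by omega : w i - 0 + 1 ≤ 0)]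
            ring
          · simp only [hvi, if_neg hip, if_neg hiq]
            ring
      have hsumabs : ∑ i, |w' i| = (∑ i, |w i|) - 2 := by
        rw [Finset.sum_congr rfl (fun i _ => habs i)]
        rw [Finset.sum_sub_distrib, Finset.sum_sub_distrib]
        simp [Finset.sum_ite_eq', hpq]
        ring
      have hpos : 0 < ∑ i, |w i| := by
        rcases lt_or_ge 0 (∑ i, |w i|) with h | h
        · exact h
        · exfalso
          have : ∀ i ∈ Finset.univ, |w i| = 0 :=
            (Finset.sum_eq_zero_iff_of_nonneg (fun i _ => abs_nonneg _)).mp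
              (le_antisymm h (Finset.sum_nonneg fun i _ => abs_nonneg _))
          exact hw (funext fun i => abs_eq_zero.mp (this i (Finset.mem_univ i)))
      have h2 : 2 ≤ ∑ i, |w i| := by
        have := habs p
        have hle : (0:ℤ) ≤ |w' p| := abs_nonneg _
        have h1p : 1 ≤ |w p| := by rw [abs_of_pos hp]; omega
        have h1q : 1 ≤ |w q| := by rw [abs_of_neg hq]; omega
        calc (2:ℤ) = 1 + 1 := by ring
        _ ≤ |w p| + |w q| := by omega
        _ ≤ ∑ i, |w i| := by
            have hq' : q ∈ Finset.univ.erase p := Finset.mem_erase.mpr ⟨fun h => hpq h.symm, Finset.mem_univ q⟩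
            have ha : |w p| + ∑ x ∈ Finset.univ.erase p, |w x| = ∑ i, |w i| :=
              Finset.add_sum_erase _ (fun x => |w x|) (Finset.mem_univ p)
            have hb : |w q| + ∑ x ∈ (Finset.univ.erase p).erase q, |w x| = ∑ x ∈ Finset.univ.erase p, |w x| :=
              Finset.add_sum_erase _ (fun x => |w x|) hq'
            have hnn : 0 ≤ ∑ i ∈ (Finset.univ.erase p).erase q, |w i| :=
              Finset.sum_nonneg fun i _ => abs_nonneg _
            omega
      have hN' : (∑ i, |w' i|).toNat < N := by
        rw [hsumabs]
        omega
      have h0' : ∑ i, w' i = 0 := by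
        simp [hw', Finset.sum_sub_distrib, h0]
      obtain ⟨m, P, Q, hm, hrep⟩ := ih _ hN' w' rfl h0'
      refine ⟨m + 1, Fin.cons p P, Fin.cons q Q, ?_, ?_⟩
      · push_cast
        rw [hsumabs] at hm
        omega
      · rw [Fin.sum_univ_succ]
        simp only [Fin.cons_succ, Fin.cons_zero]
        rw [← hrep, hw']
        abel

lemma det_bound {s : ℕ} (M : Matrix (Fin s) (Fin s) ℤ) (m : Fin s → ℕ)
    (v : ∀ j : Fin s, Fin (m j) → Fin s → ℤ)
    (hOK : ∀ j t, RowOK (v j t))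
    (hrow : ∀ j, M j = ∑ t, v j t) :
    |M.det| ≤ ∏ j, (m j : ℤ) := by
  have key : (Matrix.of fun j => ∑ t, v j t : Matrix (Fin s) (Fin s) ℤ).det
      = ∑ r : (∀ j : Fin s, Fin (m j)), (Matrix.of fun j => v j (r j)).det := by
    exact (Matrix.detRowAlternating (R := ℤ) (n := Fin s)).toMultilinearMap.map_sum (g := v)
  have hM : M = Matrix.of fun j => ∑ t, v j t := by
    ext j c
    rw [hrow j]
    simp
  rw [hM, key]
  refine le_trans (Finset.abs_sum_le_sum_abs _ _) ?_
  have : ∀ r : (∀ j : Fin s, Fin (m j)),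
      |(Matrix.of fun j => v j (r j) : Matrix (Fin s) (Fin s) ℤ).det| ≤ 1 := by
    intro r
    exact tu_det s (Matrix.of fun j => v j (r j)) (fun j => hOK j (r j))
  calc ∑ r : (∀ j : Fin s, Fin (m j)), |(Matrix.of fun j => v j (r j) : Matrix (Fin s) (Fin s) ℤ).det|
      ≤ ∑ _r : (∀ j : Fin s, Fin (m j)), (1 : ℤ) := Finset.sum_le_sum (fun r _ => this r)
    _ = (Fintype.card (∀ j : Fin s, Fin (m j)) : ℤ) := by simp
    _ = ∏ j, (m j : ℤ) := by
        rw [Fintype.card_pi]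
        push_cast
        simp

lemma single_comp_equiv {ι κ : Type*} [DecidableEq ι] [DecidableEq κ] (σ : ι ≃ κ)
    (p : ι) (c : ℤ) : (Pi.single p c : ι → ℤ) ∘ ⇑σ.symm = Pi.single (σ p) c := by
  funext x
  simp only [Function.comp_apply, Pi.single_apply]
  simp only [Equiv.symm_apply_eq]

lemma key_span {ι : Type*} [Fintype ι] [DecidableEq ι] {G : Type*} [AddCommGroup G]
    (a : ι → G) (L : ℕ) (hL : 1 ≤ L) (W : Set (ι → ℤ))
    (hWrel : ∀ w ∈ W, ∑ i, w i • a i = 0)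
    (hWsum : ∀ w ∈ W, ∑ i, w i = 0)
    (hWlen : ∀ w ∈ W, ∑ i, |w i| ≤ 2 * L)
    (ε : ι → ℤ)
    (hε : (fun i => (ε i : ℚ)) ∈ Submodule.span ℚ ((fun (w : ι → ℤ) => fun i => ((w i : ℚ))) '' W)) :
    ∃ D : ℤ, D ≠ 0 ∧ |D| ≤ (L : ℤ) ^ (Fintype.card ι) ∧ D • (∑ i, ε i • a i) = 0 := by
  classical
  set cast : (ι → ℤ) → (ι → ℚ) := fun w i => ((w i : ℚ)) with hcast
  -- finite spanning subset
  obtain ⟨T, hTW, hεT⟩ := Submodule.mem_span_finite_of_mem_span hε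
  obtain ⟨S, hST, hspanS, hLIS⟩ := exists_linearIndependent ℚ (↑T : Set (ι → ℚ))
  have hεS : cast ε ∈ Submodule.span ℚ S := by rw [hspanS]; exact hεT
  have hSW : S ⊆ cast '' W := fun x hx => hTW (hST hx)
  -- extend to a basis set
  set std : Set (ι → ℚ) := Set.range (fun i : ι => Pi.single i (1 : ℚ)) with hstd
  have hspan_top : Submodule.span ℚ (S ∪ std) = ⊤ := by
    rw [eq_top_iff]
    rw [← (Pi.basisFun ℚ ι).span_eq]
    apply Submodule.span_le.mpr
    intro x hx
    obtain ⟨i, rfl⟩ := hx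
    apply Submodule.subset_span
    right
    rw [Pi.basisFun_apply]
    exact ⟨i, rfl⟩
  obtain ⟨b, hbt, hSb, htb, hLIb⟩ := exists_linearIndepOn_id_extension hLIS
    (Set.subset_union_left (s := S) (t := std))
  have hspanb : Submodule.span ℚ b = ⊤ := by
    rw [eq_top_iff, ← hspan_top]
    exact Submodule.span_le.mpr htb
  have hbfin : b.Finite := LinearIndependent.setFinite hLIb
  haveI : Fintype ↥b := hbfin.fintype
  -- basis
  let Bas : Module.Basis ↥b ℚ (ι → ℚ) := Module.Basis.mk hLIb (by rw [show (Set.range fun x : ↥b => id (x : ι → ℚ)) = b from Subtype.range_coe, hspanb])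
  have hBas : ∀ β : ↥b, Bas β = ↑β := fun β => Module.Basis.mk_apply _ _ _
  let e : ↥b ≃ ι := Bas.indexEquiv (Pi.basisFun ℚ ι)
  -- integer rows
  have hrows : ∀ β : ↥b, ∃ wz : ι → ℤ, cast wz = ↑β ∧ ((β : ι → ℚ) ∈ S → wz ∈ W) ∧
      (wz ∈ W ∨ ∃ i, wz = Pi.single i 1) := by
    intro β
    by_cases hβS : (β : ι → ℚ) ∈ S
    · obtain ⟨w, hwW, hw⟩ := hSW hβS
      exact ⟨w, hw, fun _ => hwW, Or.inl hwW⟩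
    · have : (β : ι → ℚ) ∈ S ∪ std := hbt β.2
      rcases this with h | h
      · exact absurd h hβS
      · obtain ⟨i, hi⟩ := h
        refine ⟨Pi.single i 1, ?_, fun h => absurd h hβS, Or.inr ⟨i, rfl⟩⟩
        rw [← hi]
        funext j
        simp only [hcast, Pi.single_apply]
        split_ifs <;> simp
  choose row hrowcast hrowS hrowkind using hrows
  -- the matrix
  set Mz : Matrix ι ι ℤ := Matrix.of (fun r c => row (e.symm r) c) with hMz
  have hMzrow : ∀ r : ι, Mz r = row (e.symm r) := fun r => rfl
  set Mq : Matrix ι ι ℚ := (Int.castRingHom ℚ).mapMatrix Mz with hMq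
  have hMqrow : ∀ r : ι, Mq r = Bas (e.symm r) := by
    intro r
    rw [hBas, ← hrowcast (e.symm r)]
    rfl
  -- det nonzero
  have hdetq : Mq.det = ((Mz.det : ℤ) : ℚ) := (RingHom.map_det _ _).symm
  have hdet : Mz.det ≠ 0 := by
    intro h0
    have : Mq.det = 0 := by rw [hdetq, h0]; simp
    have htr : Mq.transpose.det = 0 := by rw [Matrix.det_transpose]; exact this
    obtain ⟨v, hv, hvm⟩ := (Matrix.exists_mulVec_eq_zero_iff).mpr htr
    have hsum : ∑ r : ι, v r • Bas (e.symm r) = 0 := by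
      funext c
      simp only [Finset.sum_apply, Pi.smul_apply, smul_eq_mul, Pi.zero_apply]
      have h0 := congrFun hvm c
      simp only [Matrix.mulVec, dotProduct, Matrix.transpose_apply, Pi.zero_apply] at h0
      rw [← h0]
      refine Finset.sum_congr rfl (fun r _ => ?_)
      rw [hMqrow r, mul_comm]
    have hLIcomp : LinearIndependent ℚ (fun r : ι => Bas (e.symm r)) :=
      Bas.linearIndependent.comp _ e.symm.injective
    have := Fintype.linearIndependent_iff.mp hLIcomp v hsum
    exact hv (funext this)
  -- adjugate identity
  set dvec : ι → ℤ := Matrix.vecMul ε (Mz.adjugate) with hdvec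
  have hid : ∀ c : ι, ∑ r : ι, dvec r * Mz r c = Mz.det * ε c := by
    intro c
    have hadj : ∀ s : ι, ∑ r : ι, Mz.adjugate s r * Mz r c = Mz.det * (if s = c then 1 else 0) := by
      intro s
      have h := congrFun (congrFun (Matrix.adjugate_mul Mz) s) c
      simpa [Matrix.mul_apply, Matrix.one_apply, mul_ite] using h
    calc ∑ r : ι, dvec r * Mz r c
        = ∑ r : ι, ∑ s : ι, ε s * Mz.adjugate s r * Mz r c := by
          refine Finset.sum_congr rfl (fun r _ => ?_)
          rw [hdvec]
          simp only [Matrix.vecMul, dotProduct]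
          rw [Finset.sum_mul]
      _ = ∑ s : ι, ∑ r : ι, ε s * Mz.adjugate s r * Mz r c := Finset.sum_comm
      _ = ∑ s : ι, ε s * (Mz.det * (if s = c then 1 else 0)) := by
          refine Finset.sum_congr rfl (fun s _ => ?_)
          rw [← hadj s, Finset.mul_sum]
          refine Finset.sum_congr rfl (fun r _ => by ring)
      _ = ε c * Mz.det := by
          simp [mul_ite]
      _ = Mz.det * ε c := mul_comm _ _
  -- coefficients vanish off S
  have himg : (⇑Bas) '' {γ : ↥b | (γ : ι → ℚ) ∈ S} = S := by
    ext x
    constructor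
    · rintro ⟨γ, hγ, rfl⟩
      rw [hBas]
      exact hγ
    · intro hx
      exact ⟨⟨x, hSb hx⟩, hx, hBas _⟩
  have hq : ∑ γ : ↥b, ((dvec (e γ) : ℚ)) • Bas γ = ((Mz.det : ℚ)) • cast ε := by
    have h1 : ∑ γ : ↥b, ((dvec (e γ) : ℚ)) • Bas γ = ∑ r : ι, ((dvec r : ℚ)) • Bas (e.symm r) :=
      Fintype.sum_equiv e _ _ (fun γ => by rw [Equiv.symm_apply_apply])
    rw [h1]
    funext c
    simp only [Finset.sum_apply, Pi.smul_apply, smul_eq_mul]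
    have hc := congrArg (fun z : ℤ => ((z : ℚ))) (hid c)
    push_cast at hc
    calc ∑ r : ι, ((dvec r : ℚ)) * (Bas (e.symm r)) c
        = ∑ r : ι, ((dvec r : ℚ)) * ((Mz r c : ℚ)) := by
          refine Finset.sum_congr rfl (fun r _ => ?_)
          congr 1
          rw [hBas, ← hrowcast (e.symm r)]
          rfl
      _ = ((Mz.det : ℚ)) * ((ε c : ℚ)) := by rw [hc, Int.cast_det]
      _ = (((Mz.det : ℚ)) • cast ε) c := by simp [hcast]
  have hvanish : ∀ β : ↥b, (β : ι → ℚ) ∉ S → dvec (e β) = 0 := by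
    intro β hβ
    have hsupp := Bas.repr_support_subset_of_mem_span {γ : ↥b | (γ : ι → ℚ) ∈ S}
      (by rw [himg]; exact hεS)
    have hcoef := congrFun (Module.Basis.repr_sum_self Bas (fun γ => ((dvec (e γ) : ℚ)))) β
    rw [hq, map_smul] at hcoef
    have hzero : (Bas.repr (cast ε)) β = 0 :=
      Finsupp.notMem_support_iff.mp (fun hmem => hβ (hsupp hmem))
    rw [Finsupp.smul_apply, hzero, smul_zero] at hcoef
    exact_mod_cast hcoef.symm
  -- determinant bound
  have hbound : |Mz.det| ≤ (L : ℤ) ^ (Fintype.card ι) := by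
    have hdecomp : ∀ r : ι, ∃ (m : ℕ) (v : Fin m → ι → ℤ), m ≤ L ∧
        (∀ t, ∃ (p q : ι) (α β : ℤ), (α = 0 ∨ α = 1) ∧ (β = 0 ∨ β = -1) ∧
          v t = Pi.single p α + Pi.single q β) ∧
        Mz r = ∑ t, v t := by
      intro r
      rcases hrowkind (e.symm r) with hW | ⟨i, hi⟩
      · obtain ⟨m, P, Q, hm, hrep⟩ := flow_decomp _ (row (e.symm r)) rfl (hWsum _ hW)
        refine ⟨m, fun t => Pi.single (P t) 1 - Pi.single (Q t) 1, ?_, ?_, ?_⟩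
        · have h2L := hWlen _ hW
          have : 2 * (m : ℤ) ≤ 2 * (L : ℤ) := by rw [hm]; exact_mod_cast h2L
          omega
        · intro t
          refine ⟨P t, Q t, 1, -1, Or.inr rfl, Or.inr rfl, ?_⟩
          funext x
          simp only [Pi.sub_apply, Pi.add_apply, Pi.single_apply]
          split_ifs <;> ring
        · rw [hMzrow r, hrep]
      · refine ⟨1, fun _ => Pi.single i 1, hL, ?_, ?_⟩
        · intro t
          refine ⟨i, i, 1, 0, Or.inr rfl, Or.inl rfl, ?_⟩
          simp
        · rw [hMzrow r, hi]
          simp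
    choose mfun vfun hmle hOKd hsumd using hdecomp
    set σ : ι ≃ Fin (Fintype.card ι) := Fintype.equivFin ι with hσ
    set M' : Matrix (Fin (Fintype.card ι)) (Fin (Fintype.card ι)) ℤ := (Matrix.reindex σ σ) Mz
      with hM'
    have hdet' : M'.det = Mz.det := Matrix.det_reindex_self σ Mz
    have hb := det_bound M' (fun j => mfun (σ.symm j))
      (fun j t => (vfun (σ.symm j) t) ∘ ⇑σ.symm)
      (by
        intro j t
        obtain ⟨p, q, α, β, hα, hβ, hv⟩ := hOKd (σ.symm j) t
        refine ⟨σ p, σ q, α, β, hα, hβ, ?_⟩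
        funext x
        rw [← single_comp_equiv σ p α, ← single_comp_equiv σ q β]
        simp only [Function.comp_apply, Pi.add_apply]
        have := congrFun hv (σ.symm x)
        simpa using this)
      (by
        intro j
        funext c
        have := congrFun (hsumd (σ.symm j)) (σ.symm c)
        simp only [Finset.sum_apply] at this ⊢
        exact this)
    rw [hdet'] at hb
    refine le_trans hb ?_
    calc ∏ j : Fin (Fintype.card ι), ((mfun (σ.symm j) : ℤ))
        ≤ ∏ _j : Fin (Fintype.card ι), (L : ℤ) := by
          refine Finset.prod_le_prod (fun j _ => by positivity) (fun j _ => ?_)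
          exact_mod_cast hmle (σ.symm j)
      _ = (L : ℤ) ^ (Fintype.card ι) := by
          rw [Finset.prod_const]
          simp
  -- conclude
  refine ⟨Mz.det, hdet, hbound, ?_⟩
  have h1 : Mz.det • (∑ i, ε i • a i) = ∑ i, (Mz.det * ε i) • a i := by
    rw [Finset.smul_sum]
    exact Finset.sum_congr rfl (fun i _ => (mul_smul _ _ _).symm)
  rw [h1]
  have h2 : ∀ i, (Mz.det * ε i) • a i = ∑ r : ι, (dvec r * Mz r i) • a i := by
    intro i
    rw [← Finset.sum_smul, hid i]
  rw [Finset.sum_congr rfl (fun i _ => h2 i), Finset.sum_comm]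
  have h3 : ∀ r, ∑ i, (dvec r * Mz r i) • a i = dvec r • ∑ i, (Mz r i) • a i := by
    intro r
    rw [Finset.smul_sum]
    exact Finset.sum_congr rfl (fun i _ => mul_smul _ _ _)
  rw [Finset.sum_congr rfl (fun r _ => h3 r)]
  apply Finset.sum_eq_zero
  intro r _
  by_cases hr : ((e.symm r : ι → ℚ)) ∈ S
  · have hW := hrowS _ hr
    have hz : ∑ i, (Mz r i) • a i = 0 := hWrel _ hW
    rw [hz, smul_zero]
  · have hd0 : dvec r = 0 := by
      have := hvanish (e.symm r) hr
      rwa [Equiv.apply_symm_apply] at this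
    rw [hd0, zero_smul]

lemma sep_vec {ι : Type*} [Fintype ι] [DecidableEq ι] (V : Submodule ℚ (ι → ℚ))
    (ε : ι → ℚ) (hε : ε ∉ V) :
    ∃ u : ι → ℚ, (∀ v ∈ V, ∑ i, v i * u i = 0) ∧ ∑ i, ε i * u i ≠ 0 := by
  have hq : Submodule.Quotient.mk (p := V) ε ≠ 0 := by
    intro h
    exact hε ((Submodule.Quotient.mk_eq_zero V).mp h)
  obtain ⟨f, hf⟩ : ∃ f : Module.Dual ℚ ((ι → ℚ) ⧸ V), f (Submodule.Quotient.mk ε) ≠ 0 := by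
    by_contra h
    push_neg at h
    exact hq ((Module.forall_dual_apply_eq_zero_iff ℚ _).mp h)
  set g : Module.Dual ℚ (ι → ℚ) := f.comp V.mkQ with hg
  have key : ∀ v : ι → ℚ, ∑ i, v i * g (Pi.single i 1) = g v := by
    intro v
    have hv : v = ∑ i, v i • (Pi.single i (1:ℚ) : ι → ℚ) := by
      funext j
      simp [Pi.single_apply, Finset.sum_ite_eq']
    conv_rhs => rw [hv]
    rw [map_sum]
    refine Finset.sum_congr rfl (fun i _ => ?_)
    rw [map_smul, smul_eq_mul]
  refine ⟨fun i => g (Pi.single i 1), ?_, ?_⟩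
  · intro v hv
    rw [key v, hg]
    simp only [LinearMap.comp_apply, Submodule.mkQ_apply]
    rw [(Submodule.Quotient.mk_eq_zero V).mpr hv, map_zero]
  · rw [key ε]
    exact hf

lemma avoid_vec {ι : Type*} [Fintype ι] [DecidableEq ι] (P : Set (ι → ℚ))
    (S : Finset (ι → ℚ))
    (hS : ∀ ε ∈ S, ∃ u : ι → ℚ, (∀ p ∈ P, ∑ i, p i * u i = 0) ∧ ∑ i, ε i * u i ≠ 0) :
    ∃ u : ι → ℚ, (∀ p ∈ P, ∑ i, p i * u i = 0) ∧ ∀ ε ∈ S, ∑ i, ε i * u i ≠ 0 := by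
  classical
  induction S using Finset.induction with
  | empty => exact ⟨0, fun p _ => by simp, fun ε hε => absurd hε (Finset.notMem_empty ε)⟩
  | @insert ε S hεS ih =>
    obtain ⟨u', hu'P, hu'S⟩ := ih (fun x hx => hS x (Finset.mem_insert_of_mem hx))
    obtain ⟨w, hwP, hwε⟩ := hS ε (Finset.mem_insert_self ε S)
    set bad : Finset ℚ := (insert ε S).image
      (fun x => -(∑ i, x i * u' i) / (∑ i, x i * w i)) with hbad
    obtain ⟨t, ht⟩ := Infinite.exists_notMem_finset bad
    refine ⟨u' + t • w, ?_, ?_⟩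
    · intro p hp
      have h1 := hu'P p hp
      have h2 := hwP p hp
      have hsplit : ∑ i, p i * (u' + t • w) i = (∑ i, p i * u' i) + t * ∑ i, p i * w i := by
        rw [Finset.mul_sum, ← Finset.sum_add_distrib]
        refine Finset.sum_congr rfl (fun y _ => ?_)
        simp only [Pi.add_apply, Pi.smul_apply, smul_eq_mul]
        ring
      rw [hsplit, h1, h2]
      ring
    · intro x hx
      have hexp : ∑ i, x i * (u' + t • w) i = (∑ i, x i * u' i) + t * (∑ i, x i * w i) := by
        rw [Finset.mul_sum, ← Finset.sum_add_distrib]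
        refine Finset.sum_congr rfl (fun y _ => ?_)
        simp only [Pi.add_apply, Pi.smul_apply, smul_eq_mul]
        ring
      rw [hexp]
      by_cases hc : (∑ i, x i * w i) = 0
      · rw [hc, mul_zero, add_zero]
        rcases Finset.mem_insert.mp hx with rfl | hxS
        · exact absurd hc hwε
        · exact hu'S x hxS
      · intro h0
        apply ht
        rw [hbad]
        apply Finset.mem_image.mpr
        refine ⟨x, hx, ?_⟩
        field_simp
        linarith [h0]

lemma short_finite {ι : Type*} [Fintype ι] [DecidableEq ι] (c : ℤ) :
    {ε : ι → ℤ | ∑ i, |ε i| ≤ c}.Finite := by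
  apply Set.Finite.subset (Set.Finite.pi (fun i : ι => Set.finite_Icc (-c) c))
  intro ε hε
  simp only [Set.mem_pi, Set.mem_univ, Set.mem_Icc, forall_true_left]
  intro i
  rw [← abs_le]
  calc |ε i| ≤ ∑ j, |ε j| := Finset.single_le_sum (fun j _ => abs_nonneg (ε j)) (Finset.mem_univ i)
    _ ≤ c := hε

lemma key_exists (k n ℓ : ℕ) (A : Finset (ZMod k)) (hA : A.card = n)
    (hfac : ∀ q : ℕ, q.Prime → q ∣ k → n ^ n < q) (hℓ : 1 ≤ ℓ) (hℓn : ℓ ≤ n) :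
    ∃ b : {x // x ∈ A} → ℤ, ∀ ε : {x // x ∈ A} → ℤ,
      ∑ i, ε i = 0 → ∑ i, |ε i| ≤ 2 * (ℓ : ℤ) →
      ((∑ i, ε i • ((i : ZMod k))) = 0 ↔ ∑ i, ε i * b i = 0) := by
  classical
  have hcard : Fintype.card {x // x ∈ A} = n := by rw [Fintype.card_coe, hA]
  set ca : ({x // x ∈ A} → ℤ) → ({x // x ∈ A} → ℚ) := fun w i => ((w i : ℚ)) with hca
  set Wz : Set ({x // x ∈ A} → ℤ) :=
    {w | (∑ i, w i = 0) ∧ (∑ i, |w i| ≤ 2*(ℓ:ℤ)) ∧ ∑ i, w i • ((i : ZMod k)) = 0} with hWz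
  set V : Submodule ℚ ({x // x ∈ A} → ℚ) := Submodule.span ℚ (ca '' Wz) with hV
  have hmain : ∀ ε : {x // x ∈ A} → ℤ, ca ε ∈ V → ∑ i, ε i • ((i : ZMod k)) = 0 := by
    intro ε hεV
    obtain ⟨D, hD0, hDle, hDrel⟩ := key_span (fun i : {x // x ∈ A} => ((i : ZMod k))) ℓ hℓ Wz
      (fun w hw => hw.2.2) (fun w hw => hw.1) (fun w hw => hw.2.1) ε hεV
    have hDbound : |D| ≤ (n:ℤ)^n := by
      refine le_trans hDle ?_
      rw [hcard]
      exact pow_le_pow_left₀ (by positivity) (by exact_mod_cast hℓn) n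
    have hcop : Nat.Coprime D.natAbs k := by
      by_contra hg
      obtain ⟨q, hq, hqd⟩ := Nat.exists_prime_and_dvd hg
      have hqk : q ∣ k := hqd.trans (Nat.gcd_dvd_right _ _)
      have hqD : q ∣ D.natAbs := hqd.trans (Nat.gcd_dvd_left _ _)
      have h1 := hfac q hq hqk
      have h2 : q ≤ D.natAbs := Nat.le_of_dvd (Int.natAbs_pos.mpr hD0) hqD
      have h3 : (D.natAbs : ℤ) ≤ (n:ℤ)^n := by rwa [Int.abs_eq_natAbs] at hDbound
      have h4 : D.natAbs ≤ n^n := by exact_mod_cast h3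
      omega
    have hU : IsUnit ((D : ZMod k)) := by
      have hU' : IsUnit ((D.natAbs : ZMod k)) := (ZMod.isUnit_iff_coprime _ _).mpr hcop
      rcases Int.natAbs_eq D with h | h
      · rw [h, Int.cast_natCast]; exact hU'
      · rw [h, Int.cast_neg, Int.cast_natCast]; exact hU'.neg
    have hzs : ((D : ZMod k)) * (∑ i, ε i • ((i : ZMod k))) = 0 := by
      rw [← zsmul_eq_mul]
      exact hDrel
    exact (hU.mul_right_eq_zero).mp hzs
  have hfin : {ε : {x // x ∈ A} → ℤ | ∑ i, |ε i| ≤ 2*(ℓ:ℤ)}.Finite := short_finite _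
  set BadZ : Set ({x // x ∈ A} → ℤ) := {ε | (∑ i, |ε i| ≤ 2*(ℓ:ℤ)) ∧ ca ε ∉ V} with hBadZ
  have hBadfin : BadZ.Finite := hfin.subset (fun ε hε => hε.1)
  set Sbad : Finset ({x // x ∈ A} → ℚ) := (hBadfin.image ca).toFinset with hSbad
  obtain ⟨u, huV, huB⟩ := avoid_vec (V : Set ({x // x ∈ A} → ℚ)) Sbad (by
    intro x hx
    rw [hSbad, Set.Finite.mem_toFinset] at hx
    obtain ⟨ε, hεB, rfl⟩ := hx
    exact sep_vec V (ca ε) hεB.2)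
  set d : ℕ := ∏ i, (u i).den with hd
  have hd0 : 0 < d := Finset.prod_pos (fun i _ => (u i).pos)
  have hint : ∀ i : {x // x ∈ A}, ∃ z : ℤ, (z : ℚ) = u i * d := by
    intro i
    have hdvd : (u i).den ∣ d := Finset.dvd_prod_of_mem _ (Finset.mem_univ i)
    obtain ⟨c, hc⟩ := hdvd
    have h1 : (u i) * ((u i).den : ℚ) = ((u i).num : ℚ) := by
      exact_mod_cast Rat.mul_den_eq_num (u i)
    refine ⟨(u i).num * c, ?_⟩
    calc (((u i).num * c : ℤ) : ℚ) = ((u i).num : ℚ) * (c:ℚ) := by push_cast; ring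
      _ = (u i * ((u i).den : ℚ)) * c := by rw [h1]
      _ = u i * (((u i).den * c : ℕ) : ℚ) := by push_cast; ring
      _ = u i * d := by rw [← hc]
  choose bz hbz using hint
  refine ⟨bz, fun ε hsum hlen => ?_⟩
  have hcastsum : ((∑ i, ε i * bz i : ℤ) : ℚ) = (d:ℚ) * ∑ i, (ca ε) i * u i := by
    push_cast
    rw [Finset.mul_sum]
    refine Finset.sum_congr rfl (fun i _ => ?_)
    rw [hbz i]
    simp only [hca]
    ring
  constructor
  · intro hrel
    have hεV : ca ε ∈ V := Submodule.subset_span ⟨ε, ⟨hsum, hlen, hrel⟩, rfl⟩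
    have hdot : ∑ i, (ca ε) i * u i = 0 := huV (ca ε) hεV
    have hz : ((∑ i, ε i * bz i : ℤ) : ℚ) = 0 := by rw [hcastsum, hdot, mul_zero]
    exact_mod_cast hz
  · intro hb
    by_contra hrel
    have hεBad : ε ∈ BadZ := ⟨hlen, fun hmem => hrel (hmain ε hmem)⟩
    have hmem : ca ε ∈ Sbad := by
      rw [hSbad, Set.Finite.mem_toFinset]
      exact ⟨ε, hεBad, rfl⟩
    apply huB (ca ε) hmem
    have hz : ((∑ i, ε i * bz i : ℤ) : ℚ) = 0 := by rw [hb]; simp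
    rw [hcastsum] at hz
    rcases mul_eq_zero.mp hz with h | h
    · exact absurd h (by positivity)
    · exact h

/-- Lev: Let `k ≥ 1`, let `A ⊆ ℤ_k` have cardinality `n`, and suppose every
prime factor of `k` exceeds `n^n`. Then for every positive `ℓ ≤ n` there exist `B ⊆ ℤ` and a
map `φ` that is a Freiman isomorphism of order `ℓ` from `A` to `B`. -/
theorem stmt_5 (k : ℕ) (hk : 1 ≤ k) (n : ℕ) (A : Finset (ZMod k)) (hA : A.card = n)
    (hfac : ∀ q : ℕ, q.Prime → q ∣ k → n ^ n < q)
    (ℓ : ℕ) (hℓ : 1 ≤ ℓ) (hℓn : ℓ ≤ n) :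
    ∃ (B : Set ℤ) (φ : ZMod k → ℤ), IsAddFreimanIso ℓ (A : Set (ZMod k)) B φ := by
  classical
  obtain ⟨b, hb⟩ := key_exists k n ℓ A hA hfac hℓ hℓn
  set φ : ZMod k → ℤ := fun x => if h : x ∈ A then b ⟨x, h⟩ else 0 with hφ
  have hφA : ∀ i : {x // x ∈ A}, φ (i : ZMod k) = b i := by
    intro i
    rw [hφ]
    simp only [i.2, dif_pos]
  -- counting helpers
  have hcount : ∀ s : Multiset (ZMod k), (∀ x ∈ s, x ∈ A) →
      ∑ x ∈ A, s.count x = Multiset.card s := by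
    intro s hs
    rw [← Multiset.toFinset_sum_count_eq s]
    symm
    apply Finset.sum_subset
    · intro x hx
      exact hs x (Multiset.mem_toFinset.mp hx)
    · intro x _ hx
      exact Multiset.count_eq_zero_of_notMem (fun hc => hx (Multiset.mem_toFinset.mpr hc))
  have hmap : ∀ {M : Type} [AddCommMonoid M] (f : ZMod k → M) (s : Multiset (ZMod k)),
      (∀ x ∈ s, x ∈ A) → (s.map f).sum = ∑ x ∈ A, s.count x • f x := by
    intro M _ f s hs
    rw [Finset.sum_multiset_map_count]
    apply Finset.sum_subset
    · intro x hx
      exact hs x (Multiset.mem_toFinset.mp hx)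
    · intro x _ hx
      rw [Multiset.count_eq_zero_of_notMem (fun hc => hx (Multiset.mem_toFinset.mpr hc)),
        zero_smul]
  -- the main iff, multiset form
  have hmulti : ∀ s t : Multiset (ZMod k), (∀ x ∈ s, x ∈ A) → (∀ x ∈ t, x ∈ A) →
      Multiset.card s = ℓ → Multiset.card t = ℓ →
      ((s.map φ).sum = (t.map φ).sum ↔ s.sum = t.sum) := by
    intro s t hsA htA hs ht
    set ε : {x // x ∈ A} → ℤ := fun i => ((s.count (i : ZMod k) : ℤ) - (t.count (i : ZMod k) : ℤ))
      with hε
    have hsum0 : ∑ i, ε i = 0 := by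
      rw [hε]
      rw [Finset.sum_coe_sort A (fun x => ((s.count x : ℤ) - (t.count x : ℤ)))]
      rw [Finset.sum_sub_distrib]
      have h1 : ∑ x ∈ A, (s.count x : ℤ) = ((Multiset.card s : ℕ) : ℤ) := by
        rw [← hcount s hsA]; push_cast; rfl
      have h2 : ∑ x ∈ A, (t.count x : ℤ) = ((Multiset.card t : ℕ) : ℤ) := by
        rw [← hcount t htA]; push_cast; rfl
      rw [h1, h2, hs, ht, sub_self]
    have hlen : ∑ i, |ε i| ≤ 2 * (ℓ : ℤ) := by
      have hpt : ∀ i : {x // x ∈ A}, |ε i| ≤ (s.count (i : ZMod k) : ℤ) + (t.count (i : ZMod k) : ℤ) := by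
        intro i
        rw [hε]
        refine le_trans (abs_sub _ _) ?_
        rw [abs_of_nonneg (by positivity), abs_of_nonneg (by positivity)]
      refine le_trans (Finset.sum_le_sum (fun i _ => hpt i)) ?_
      rw [Finset.sum_add_distrib]
      rw [Finset.sum_coe_sort A (fun x => (s.count x : ℤ)),
        Finset.sum_coe_sort A (fun x => (t.count x : ℤ))]
      have h1 : ∑ x ∈ A, (s.count x : ℤ) = ((Multiset.card s : ℕ) : ℤ) := by
        rw [← hcount s hsA]; push_cast; rfl
      have h2 : ∑ x ∈ A, (t.count x : ℤ) = ((Multiset.card t : ℕ) : ℤ) := by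
        rw [← hcount t htA]; push_cast; rfl
      rw [h1, h2, hs, ht]
      ring_nf
      rfl
    have hLHS : ∑ i, ε i • ((i : ZMod k)) = s.sum - t.sum := by
      rw [hε]
      have : ∀ i : {x // x ∈ A}, ((s.count (i : ZMod k) : ℤ) - (t.count (i : ZMod k) : ℤ)) • ((i : ZMod k))
          = (s.count (i : ZMod k)) • ((i : ZMod k)) - (t.count (i : ZMod k)) • ((i : ZMod k)) := by
        intro i
        rw [sub_smul, natCast_zsmul, natCast_zsmul]
      rw [Finset.sum_congr rfl (fun i _ => this i), Finset.sum_sub_distrib]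
      rw [Finset.sum_coe_sort A (fun x => (s.count x) • x),
        Finset.sum_coe_sort A (fun x => (t.count x) • x)]
      have hs' := hmap (id : ZMod k → ZMod k) s hsA
      have ht' := hmap (id : ZMod k → ZMod k) t htA
      rw [Multiset.map_id] at hs' ht'
      simp only [id_eq] at hs' ht'
      rw [← hs', ← ht']
    have hRHS : ∑ i, ε i * b i = (s.map φ).sum - (t.map φ).sum := by
      rw [hε]
      have : ∀ i : {x // x ∈ A}, ((s.count (i : ZMod k) : ℤ) - (t.count (i : ZMod k) : ℤ)) * b i
          = (s.count (i : ZMod k)) • φ (i : ZMod k) - (t.count (i : ZMod k)) • φ (i : ZMod k) := by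
        intro i
        rw [hφA i, nsmul_eq_mul, nsmul_eq_mul]
        push_cast
        ring
      rw [Finset.sum_congr rfl (fun i _ => this i), Finset.sum_sub_distrib]
      rw [Finset.sum_coe_sort A (fun x => (s.count x) • φ x),
        Finset.sum_coe_sort A (fun x => (t.count x) • φ x)]
      rw [← hmap φ s hsA, ← hmap φ t htA]
    have hkey := hb ε hsum0 hlen
    rw [hLHS, hRHS] at hkey
    constructor
    · intro h
      have : (s.map φ).sum - (t.map φ).sum = 0 := by rw [h, sub_self]
      have := hkey.mpr this
      exact sub_eq_zero.mp this
    · intro h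
      have : s.sum - t.sum = 0 := by rw [h, sub_self]
      have := hkey.mp this
      exact sub_eq_zero.mp this
  refine ⟨φ '' (A : Set (ZMod k)), φ, ?_, ?_⟩
  · -- BijOn
    refine ⟨fun x hx => Set.mem_image_of_mem φ hx, ?_, Set.surjOn_image φ _⟩
    intro x hx y hy hxy
    by_contra hne
    have hxA : x ∈ A := hx
    have hyA : y ∈ A := hy
    set ε : {z // z ∈ A} → ℤ := fun i =>
      (if (i : ZMod k) = x then (1:ℤ) else 0) - (if (i : ZMod k) = y then (1:ℤ) else 0) with hε
    have h1 : ∑ i : {z // z ∈ A}, (if (i : ZMod k) = x then (1:ℤ) else 0) = 1 := by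
      rw [Finset.sum_coe_sort A (fun z => if z = x then (1:ℤ) else 0)]
      rw [Finset.sum_ite_eq' A x (fun _ => (1:ℤ))]
      rw [if_pos hxA]
    have h2 : ∑ i : {z // z ∈ A}, (if (i : ZMod k) = y then (1:ℤ) else 0) = 1 := by
      rw [Finset.sum_coe_sort A (fun z => if z = y then (1:ℤ) else 0)]
      rw [Finset.sum_ite_eq' A y (fun _ => (1:ℤ))]
      rw [if_pos hyA]
    have hsum0 : ∑ i, ε i = 0 := by
      rw [hε, Finset.sum_sub_distrib, h1, h2, sub_self]
    have hlen : ∑ i, |ε i| ≤ 2 * (ℓ : ℤ) := by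
      have hpt : ∀ i : {z // z ∈ A},
          |ε i| ≤ (if (i : ZMod k) = x then (1:ℤ) else 0) + (if (i : ZMod k) = y then (1:ℤ) else 0) := by
        intro i
        rw [hε]
        refine le_trans (abs_sub _ _) ?_
        rw [abs_of_nonneg (by split_ifs <;> norm_num), abs_of_nonneg (by split_ifs <;> norm_num)]
      refine le_trans (Finset.sum_le_sum (fun i _ => hpt i)) ?_
      rw [Finset.sum_add_distrib, h1, h2]
      have : (1:ℤ) ≤ (ℓ:ℤ) := by exact_mod_cast hℓ
      linarith
    have hLHS : ∑ i, ε i • ((i : ZMod k)) = x - y := by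
      rw [hε]
      have : ∀ i : {z // z ∈ A}, ((if (i : ZMod k) = x then (1:ℤ) else 0) -
          (if (i : ZMod k) = y then (1:ℤ) else 0)) • ((i : ZMod k))
          = (if (i : ZMod k) = x then ((i : ZMod k)) else 0) -
            (if (i : ZMod k) = y then ((i : ZMod k)) else 0) := by
        intro i
        rw [sub_smul]
        congr 1 <;> (split_ifs <;> simp)
      rw [Finset.sum_congr rfl (fun i _ => this i), Finset.sum_sub_distrib]
      rw [Finset.sum_coe_sort A (fun z => if z = x then z else 0),
        Finset.sum_coe_sort A (fun z => if z = y then z else 0)]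
      rw [Finset.sum_ite_eq' A x (fun z => z), Finset.sum_ite_eq' A y (fun z => z)]
      rw [if_pos hxA, if_pos hyA]
    have hRHS : ∑ i, ε i * b i = φ x - φ y := by
      rw [hε]
      have : ∀ i : {z // z ∈ A}, ((if (i : ZMod k) = x then (1:ℤ) else 0) -
          (if (i : ZMod k) = y then (1:ℤ) else 0)) * b i
          = (if (i : ZMod k) = x then φ (i : ZMod k) else 0) -
            (if (i : ZMod k) = y then φ (i : ZMod k) else 0) := by
        intro i
        rw [← hφA i]
        split_ifs <;> ring
      rw [Finset.sum_congr rfl (fun i _ => this i), Finset.sum_sub_distrib]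
      rw [Finset.sum_coe_sort A (fun z => if z = x then φ z else 0),
        Finset.sum_coe_sort A (fun z => if z = y then φ z else 0)]
      rw [Finset.sum_ite_eq' A x (fun z => φ z), Finset.sum_ite_eq' A y (fun z => φ z)]
      rw [if_pos hxA, if_pos hyA]
    have hkey := hb ε hsum0 hlen
    rw [hLHS, hRHS] at hkey
    have : x - y = 0 := hkey.mpr (by rw [hxy, sub_self])
    exact hne (sub_eq_zero.mp this)
  · -- map_sum_eq_map_sum
    intro s t hsA htA hs ht
    exact hmulti s t (fun x hx => hsA hx) (fun x hx => htA hx) hs ht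
end

section
/- Let p be a prime, let n ≥ 2 with p > 2n, and let A be a subset of ℤ_p := ℤ/pℤ of cardinality n that is symmetric, i.e. −v ∈ A whenever v ∈ A. Let Y₁, Y₂, Y₃ be independent random variables each uniformly distributed on A, and set Y = Y₁ + Y₂ + Y₃. Then P[Y = x] ≤ 0.99993 / n for every x ∈ ℤ_p. -/
open MeasureTheory ProbabilityTheory ENNReal

section CombAux
open Finset Pointwise

section Comb
variable {p : ℕ} [Fact p.Prime]

-- number of a ∈ A with a + d ∉ A
private lemma bd_add (A : Finset (ZMod p)) (d e : ZMod p) :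
    #(A.filter fun a => a + (d + e) ∉ A) ≤
      #(A.filter fun a => a + d ∉ A) + #(A.filter fun a => a + e ∉ A) := by
  classical
  calc #(A.filter fun a => a + (d + e) ∉ A)
      ≤ #((A.filter fun a => a + d ∉ A) ∪ (A.filter fun a => a + e ∉ A).image (fun a => a - d)) := by
        apply card_le_card
        intro c hc
        simp only [mem_filter] at hc
        by_cases h : c + d ∈ A
        · refine mem_union.2 (Or.inr ?_)
          refine mem_image.2 ⟨c + d, ?_, by ring⟩
          refine mem_filter.2 ⟨h, ?_⟩
          intro habs
          exact hc.2 (by rwa [show c + d + e = c + (d + e) by ring] at habs)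
        · exact mem_union.2 (Or.inl (mem_filter.2 ⟨hc.1, h⟩))
    _ ≤ _ := le_trans (card_union_le _ _) (by first | exact Nat.add_le_add_left card_image_le _ | exact Nat.add_le_add_right card_image_le _)

private lemma bd_pair (A : Finset (ZMod p)) (x a a' : ZMod p) :
    #(A.filter fun c => c + (a' - a) ∉ A) ≤
      #(A.filter fun b => x - a - b ∉ A) + #(A.filter fun b => x - a' - b ∉ A) := by
  classical
  calc #(A.filter fun c => c + (a' - a) ∉ A)
      ≤ #((A.filter fun b => x - a - b ∉ A).image (fun b => x - a' - b)
          ∪ (A.filter fun b => x - a' - b ∉ A)) := by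
        apply card_le_card
        intro c hc
        simp only [mem_filter] at hc
        by_cases h : x - a' - c ∈ A
        · refine mem_union.2 (Or.inl ?_)
          refine mem_image.2 ⟨x - a' - c, ?_, by ring⟩
          refine mem_filter.2 ⟨h, ?_⟩
          intro habs
          exact hc.2 (by rwa [show x - a - (x - a' - c) = c + (a' - a) by ring] at habs)
        · exact mem_union.2 (Or.inr (mem_filter.2 ⟨hc.1, h⟩))
    _ ≤ _ := le_trans (card_union_le _ _) (by first | exact Nat.add_le_add_left card_image_le _ | exact Nat.add_le_add_right card_image_le _)

private lemma sum_ov (A : Finset (ZMod p)) :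
    ∑ d : ZMod p, #(A.filter fun a => a + d ∈ A) = #A ^ 2 := by
  classical
  have h : ∀ d : ZMod p, #(A.filter fun a => a + d ∈ A) = ∑ a ∈ A, if a + d ∈ A then 1 else 0 := by
    intro d; simpa using (Finset.sum_boole (s := A) (p := fun a => a + d ∈ A)).symm
  simp only [h]
  rw [Finset.sum_comm]
  have h2 : ∀ a : ZMod p, ∑ d : ZMod p, (if a + d ∈ A then (1:ℕ) else 0) = #A := by
    intro a
    rw [Finset.sum_boole]
    simp only [Nat.cast_id]
    apply card_nbij' (fun d => a + d) (fun y => y - a)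
    · intro d hd; simpa using hd
    · intro y hy; simpa using hy
    · intro d _; ring
    · intro y _; ring
  rw [Finset.sum_congr rfl (fun a _ => h2 a), Finset.sum_const, smul_eq_mul, sq]

end Comb


section Comb2
variable {p : ℕ} [Fact p.Prime]

-- small n case
private lemma count_small {n : ℕ} (hn : 2 ≤ n) (hp : 2 * n < p) (hns : n ≤ 14284)
    (A : Finset (ZMod p)) (hA : #A = n) (x : ZMod p) :
    100000 * (∑ a ∈ A, ∑ b ∈ A, if x - a - b ∈ A then (1:ℕ) else 0) ≤ 99993 * n ^ 2 := by
  classical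
  set T := ∑ a ∈ A, ∑ b ∈ A, (if x - a - b ∈ A then (1:ℕ) else 0) with hT
  set M := ∑ a ∈ A, ∑ b ∈ A, (if x - a - b ∉ A then (1:ℕ) else 0) with hM
  have hAne : A.Nonempty := card_pos.1 (by omega)
  have hTM : T + M = n ^ 2 := by
    rw [hT, hM, ← Finset.sum_add_distrib]
    have : ∀ a ∈ A, ((∑ b ∈ A, if x - a - b ∈ A then (1:ℕ) else 0)
        + ∑ b ∈ A, if x - a - b ∉ A then (1:ℕ) else 0) = n := by
      intro a _
      rw [← Finset.sum_add_distrib]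
      have : ∀ b ∈ A, ((if x - a - b ∈ A then (1:ℕ) else 0)
          + if x - a - b ∉ A then (1:ℕ) else 0) = 1 := by
        intro b _; by_cases h : x - a - b ∈ A <;> simp [h]
      rw [Finset.sum_congr rfl this, Finset.sum_const, smul_eq_mul, mul_one, hA]
    rw [Finset.sum_congr rfl this, Finset.sum_const, smul_eq_mul, hA, sq]
  -- M ≥ n - 1 via Cauchy-Davenport
  have hMcard : M = #((A ×ˢ A).filter fun q => x - q.1 - q.2 ∉ A) := by
    have h0 : M = ∑ q ∈ A ×ˢ A, (if x - q.1 - q.2 ∉ A then (1:ℕ) else 0) := by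
      rw [hM, Finset.sum_product]
    rw [h0]
    rw [Finset.sum_boole]; rfl
  have hCD : min p (n + n - 1) ≤ #(A + A) := by
    have := ZMod.cauchy_davenport (Fact.out : p.Prime) hAne hAne
    rwa [hA] at this
  have hmin : min p (n + n - 1) = n + n - 1 := min_eq_right (by omega)
  have hF' : #((A + A).filter fun s => x - s ∈ A) ≤ n := by
    calc #((A + A).filter fun s => x - s ∈ A) ≤ #(A.image fun c => x - c) := by
          apply card_le_card
          intro s hs
          simp only [mem_filter] at hs
          exact mem_image.2 ⟨x - s, hs.2, by ring⟩
      _ ≤ #A := card_image_le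
      _ = n := hA
  have hsplit : #((A + A).filter fun s => x - s ∈ A) + #((A + A).filter fun s => x - s ∉ A)
      = #(A + A) := Finset.card_filter_add_card_filter_not _
  have hFM : #((A + A).filter fun s => x - s ∉ A) ≤ M := by
    rw [hMcard]
    calc #((A + A).filter fun s => x - s ∉ A)
        ≤ #(((A ×ˢ A).filter fun q => x - q.1 - q.2 ∉ A).image fun q => q.1 + q.2) := by
          apply card_le_card
          intro s hs
          simp only [mem_filter] at hs
          obtain ⟨a, ha, b, hb, rfl⟩ := Finset.mem_add.1 hs.1
          refine mem_image.2 ⟨(a, b), ?_, rfl⟩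
          refine mem_filter.2 ⟨Finset.mem_product.2 ⟨ha, hb⟩, ?_⟩
          simpa [sub_sub] using hs.2
      _ ≤ _ := card_image_le
  have hMlb : n - 1 ≤ M := by omega
  -- arithmetic
  have key : 7 * n ^ 2 + 100000 ≤ 100000 * n := by
    have h1 : (7:ℤ) * n ^ 2 + 100000 ≤ 100000 * n := by
      have h2 : (0:ℤ) ≤ (n:ℤ) - 2 := by
        have : (2:ℤ) ≤ (n:ℤ) := by exact_mod_cast hn
        linarith
      have h3 : (0:ℤ) ≤ 14284 - (n:ℤ) := by
        have : (n:ℤ) ≤ 14284 := by exact_mod_cast hns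
        linarith
      nlinarith [mul_nonneg h2 h3]
    exact_mod_cast h1
  have hsq : n ^ 2 = n * n := sq n
  omega

end Comb2

section Comb3
variable {p : ℕ} [Fact p.Prime]

private lemma final_arith (n T g m k1 q : ℕ) (hns : 14285 ≤ n)
    (e1 : T ≤ g * n + m * q) (e2 : 6 * g ≤ 2 * n + 5) (e3 : g + m = n)
    (e4 : (k1 + 1) + q = n) (e5 : n < 7000 * (k1 + 1)) (e6 : 7000 * (k1 + 1) ≤ n + 7000) :
    100000 * T ≤ 99993 * n ^ 2 := by
  have hZ : (100000 : ℤ) * T ≤ 99993 * (n:ℤ) ^ 2 := by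
    have f1 : (T:ℤ) ≤ g * n + m * q := by exact_mod_cast e1
    have f2 : (6:ℤ) * g ≤ 2 * n + 5 := by exact_mod_cast e2
    have f3 : (g:ℤ) + m = n := by exact_mod_cast e3
    have f4 : ((k1:ℤ) + 1) + q = n := by exact_mod_cast e4
    have f5 : (n:ℤ) < 7000 * ((k1:ℤ) + 1) := by exact_mod_cast e5
    have f6 : (7000:ℤ) * ((k1:ℤ) + 1) ≤ n + 7000 := by exact_mod_cast e6
    have f7 : (14285:ℤ) ≤ n := by exact_mod_cast hns
    have f8 : (0:ℤ) ≤ m := Int.natCast_nonneg m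
    have f9 : (0:ℤ) ≤ k1 := Int.natCast_nonneg k1
    have f10 : (0:ℤ) ≤ g := Int.natCast_nonneg g
    have f11 : (0:ℤ) ≤ q := Int.natCast_nonneg q
    have hmul : (4 * (n:ℤ) - 5) * ((n:ℤ) + 1) ≤ (6 * m) * (7000 * ((k1:ℤ) + 1)) := by
      apply mul_le_mul <;> linarith
    nlinarith [hmul, f7, mul_le_mul_of_nonneg_right f7 (Int.natCast_nonneg n)]
  exact_mod_cast hZ

private lemma count_large {n : ℕ} (hp : 2 * n < p) (hns : 14285 ≤ n)
    (A : Finset (ZMod p)) (hA : #A = n) (x : ZMod p) :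
    100000 * (∑ a ∈ A, ∑ b ∈ A, if x - a - b ∈ A then (1:ℕ) else 0) ≤ 99993 * n ^ 2 := by
  classical
  set k1 := n / 7000 with hk1
  set bad : ZMod p → ℕ := fun a => #(A.filter fun b => x - a - b ∉ A) with hbad
  set bd : ZMod p → ℕ := fun d => #(A.filter fun a => a + d ∉ A) with hbd
  set Sym : ℕ → Finset (ZMod p) := fun j => univ.filter (fun d => bd d ≤ j) with hSym
  -- basic facts
  have hnpos : 0 < n := by omega
  have hAne : A.Nonempty := card_pos.1 (by omega)
  have h12k1 : 12 * k1 ≤ n := by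
    have h1 : k1 ≤ n / 12 := Nat.div_le_div_left (by norm_num) (by norm_num)
    have h2 : 12 * (n / 12) ≤ n := Nat.mul_div_le n 12
    omega
  have h7000 : n < 7000 * (k1 + 1) ∧ 7000 * (k1 + 1) ≤ n + 7000 := by
    constructor
    · have h1 := Nat.div_add_mod n 7000
      have h2 : n % 7000 < 7000 := Nat.mod_lt _ (by norm_num)
      omega
    · have h1 := Nat.div_add_mod n 7000
      omega
  -- Sym is closed under addition
  have hSymAdd : ∀ j j' : ℕ, Sym j + Sym j' ⊆ Sym (j + j') := by
    intro j j'
    rw [Finset.add_subset_iff]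
    intro y hy z hz
    simp only [hSym, mem_filter, mem_univ, true_and] at hy hz ⊢
    exact le_trans (bd_add A y z) (Nat.add_le_add hy hz)
  have hSymZero : (0 : ZMod p) ∈ Sym 0 := by
    have h0 : (A.filter fun a => a + (0:ZMod p) ∉ A) = ∅ := by
      apply Finset.filter_false_of_mem
      intro a ha
      simp [ha]
    simp only [hSym, mem_filter, mem_univ, true_and, hbd]
    rw [h0]
    simp
  have hSymMono : ∀ j j' : ℕ, j ≤ j' → Sym j ⊆ Sym j' := by
    intro j j' h
    apply Finset.monotone_filter_right
    intro d _ hd; exact le_trans hd h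
  have hSymNe : ∀ j : ℕ, (Sym j).Nonempty := fun j => ⟨0, hSymMono 0 j (Nat.zero_le _) hSymZero⟩
  -- card bound on Sym (6 * k1)
  have hov : ∀ d, #(A.filter fun a => a + d ∈ A) + bd d = n := by
    intro d
    rw [hbd]
    rw [← hA]
    exact Finset.card_filter_add_card_filter_not _
  have hσbound : #(Sym (6 * k1)) * (n - 6 * k1) ≤ n ^ 2 := by
    calc #(Sym (6 * k1)) * (n - 6 * k1)
        ≤ ∑ d ∈ Sym (6 * k1), #(A.filter fun a => a + d ∈ A) := by
          have hlow : ∀ d ∈ Sym (6*k1), n - 6*k1 ≤ #(A.filter fun a => a + d ∈ A) := by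
            intro d hd
            simp only [hSym, mem_filter, mem_univ, true_and] at hd
            have := hov d
            omega
          have := Finset.card_nsmul_le_sum (Sym (6*k1))
            (fun d => #(A.filter fun a => a + d ∈ A)) (n - 6*k1) hlow
          simpa [smul_eq_mul] using this
      _ ≤ ∑ d : ZMod p, #(A.filter fun a => a + d ∈ A) :=
          Finset.sum_le_sum_of_subset (Finset.subset_univ _)
      _ = n ^ 2 := by rw [sum_ov, hA]
  have hσ2n : #(Sym (6 * k1)) ≤ 2 * n := by
    have h1 : n ≤ 2 * (n - 6 * k1) := by omega
    have h2 : #(Sym (6 * k1)) * n ≤ (2 * n) * n := by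
      calc #(Sym (6 * k1)) * n ≤ #(Sym (6 * k1)) * (2 * (n - 6 * k1)) := by
            exact Nat.mul_le_mul_left _ h1
        _ = 2 * (#(Sym (6 * k1)) * (n - 6 * k1)) := by ring
        _ ≤ 2 * n ^ 2 := by omega
        _ = (2 * n) * n := by ring
    exact Nat.le_of_mul_le_mul_right h2 hnpos
  -- Cauchy-Davenport chain on Sym (2*k1)
  set s3 := #(Sym (2 * k1)) with hs3
  have hpr : (Fact.out : p.Prime) = Fact.out := rfl
  have hSS : Sym (2 * k1) + Sym (2 * k1) ⊆ Sym (6 * k1) := by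
    refine subset_trans (hSymAdd _ _) (hSymMono _ _ (by omega))
  have hSSS : (Sym (2 * k1) + Sym (2 * k1)) + Sym (2 * k1) ⊆ Sym (6 * k1) := by
    refine subset_trans (Finset.add_subset_add_right (hSymAdd _ _)) ?_
    refine subset_trans (hSymAdd _ _) (hSymMono _ _ (by omega))
  have hcd1 : min p (s3 + s3 - 1) ≤ #(Sym (2 * k1) + Sym (2 * k1)) :=
    ZMod.cauchy_davenport Fact.out (hSymNe _) (hSymNe _)
  have hcd2 : min p (#(Sym (2 * k1) + Sym (2 * k1)) + s3 - 1)
      ≤ #((Sym (2 * k1) + Sym (2 * k1)) + Sym (2 * k1)) :=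
    ZMod.cauchy_davenport Fact.out ((hSymNe _).add (hSymNe _)) (hSymNe _)
  have hSScard : #(Sym (2 * k1) + Sym (2 * k1)) ≤ 2 * n := le_trans (card_le_card hSS) hσ2n
  have hSSScard : #((Sym (2 * k1) + Sym (2 * k1)) + Sym (2 * k1)) ≤ 2 * n :=
    le_trans (card_le_card hSSS) hσ2n
  have h3s3 : 3 * s3 ≤ 2 * n + 2 := by
    rcases le_or_gt p (s3 + s3 - 1) with h | h
    · rw [min_eq_left h] at hcd1; omega
    · rw [min_eq_right h.le] at hcd1
      rcases le_or_gt p (#(Sym (2 * k1) + Sym (2 * k1)) + s3 - 1) with h' | h'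
      · rw [min_eq_left h'] at hcd2; omega
      · rw [min_eq_right h'.le] at hcd2
        have hs3pos : 1 ≤ s3 := card_pos.2 (hSymNe _)
        omega
  -- the set G of good a's
  set G := A.filter (fun a => bad a ≤ k1) with hG
  set g := #G with hg
  have hgn : g ≤ n := by rw [hg, hG, ← hA]; exact card_filter_le _ _
  have h6g : 6 * g ≤ 2 * n + 5 := by
    rcases Finset.eq_empty_or_nonempty G with hGe | hGne
    · rw [hg, hGe]; simp
    · have hneg : #(G.image (fun a => -a)) = g := by
        rw [hg]; exact card_image_of_injective _ neg_injective
      have hGG : G + G.image (fun a => -a) ⊆ Sym (2 * k1) := by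
        rw [Finset.add_subset_iff]
        intro y hy z hz
        obtain ⟨a', ha', rfl⟩ := mem_image.1 hz
        simp only [hSym, mem_filter, mem_univ, true_and, hbd]
        rw [hG] at hy ha'
        have hyG : bad y ≤ k1 := (mem_filter.1 hy).2
        have ha'G : bad a' ≤ k1 := (mem_filter.1 ha').2
        have := bd_pair A x a' y
        have heq : y + -a' = y - a' := by ring
        rw [heq]
        rw [hbad] at hyG ha'G
        simp only at hyG ha'G
        omega
      have hcd3 : min p (g + g - 1) ≤ #(G + G.image (fun a => -a)) := by
        have h := ZMod.cauchy_davenport (Fact.out : p.Prime) hGne (hGne.image (fun a => -a))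
        rw [hneg] at h
        rw [← hg] at h
        exact h
      have hle : #(G + G.image (fun a => -a)) ≤ s3 := card_le_card hGG
      rcases le_or_gt p (g + g - 1) with h | h
      · rw [min_eq_left h] at hcd3; omega
      · rw [min_eq_right h.le] at hcd3
        have hgpos : 1 ≤ g := card_pos.2 hGne
        omega
  -- bound T
  set T := ∑ a ∈ A, ∑ b ∈ A, (if x - a - b ∈ A then (1:ℕ) else 0) with hT
  have hTval : ∀ a, (∑ b ∈ A, if x - a - b ∈ A then (1:ℕ) else 0) = n - bad a := by
    intro a
    have h1 : (∑ b ∈ A, if x - a - b ∈ A then (1:ℕ) else 0)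
        = #(A.filter fun b => x - a - b ∈ A) := by
      simpa using Finset.sum_boole (s := A) (p := fun b => x - a - b ∈ A)
    have h2 : #(A.filter fun b => x - a - b ∈ A) + bad a = n := by
      rw [hbad, ← hA]
      exact Finset.card_filter_add_card_filter_not _
    omega
  set m := #(A.filter fun a => ¬ (bad a ≤ k1)) with hm
  have hgm : g + m = n := by
    rw [hg, hG, hm, ← hA]
    exact Finset.card_filter_add_card_filter_not _
  have hTbound : T ≤ g * n + m * (n - (k1 + 1)) := by
    rw [hT, Finset.sum_congr rfl (fun a _ => hTval a),
      ← Finset.sum_filter_add_sum_filter_not A (fun a => bad a ≤ k1)]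
    have hb1 : ∑ a ∈ A.filter (fun a => bad a ≤ k1), (n - bad a) ≤ g * n := by
      calc ∑ a ∈ A.filter (fun a => bad a ≤ k1), (n - bad a)
          ≤ ∑ a ∈ A.filter (fun a => bad a ≤ k1), n :=
            Finset.sum_le_sum (fun a _ => Nat.sub_le _ _)
        _ = g * n := by rw [Finset.sum_const, smul_eq_mul, hg, hG]
    have hb2 : ∑ a ∈ A.filter (fun a => ¬ (bad a ≤ k1)), (n - bad a) ≤ m * (n - (k1 + 1)) := by
      calc ∑ a ∈ A.filter (fun a => ¬ (bad a ≤ k1)), (n - bad a)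
          ≤ ∑ a ∈ A.filter (fun a => ¬ (bad a ≤ k1)), (n - (k1 + 1)) := by
            apply Finset.sum_le_sum
            intro a ha
            have := (mem_filter.1 ha).2
            omega
        _ = m * (n - (k1 + 1)) := by rw [Finset.sum_const, smul_eq_mul, hm]
    omega
  -- final arithmetic
  have hkq : (k1 + 1) + (n - (k1 + 1)) = n := by omega
  exact final_arith n T g m k1 (n - (k1 + 1)) hns hTbound h6g hgm hkq h7000.1 h7000.2

end Comb3

section CombMain
open Finset Pointwise
private lemma count_bound {p : ℕ} [Fact p.Prime] {n : ℕ} (hn : 2 ≤ n) (hp : 2 * n < p)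
    (A : Finset (ZMod p)) (hA : #A = n) (x : ZMod p) :
    100000 * (∑ a ∈ A, ∑ b ∈ A, if x - a - b ∈ A then (1:ℕ) else 0) ≤ 99993 * n ^ 2 := by
  rcases le_or_gt n 14284 with h | h
  · exact count_small hn hp h A hA x
  · exact count_large hp h A hA x
end CombMain
end CombAux

open Finset in
/-- Lemma 3.1: Let `p` be prime, `n ≥ 2` with `p > 2n`, and let `A ⊆ ℤ_p` be a
symmetric set of cardinality `n`. For `Y₁, Y₂, Y₃` independent uniform on `A` and
`Y = Y₁+Y₂+Y₃`, one has `P[Y = x] ≤ 0.99993/n` for every `x ∈ ℤ_p`. -/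
theorem stmt_9 (p : ℕ) [Fact p.Prime] (n : ℕ) (hn : 2 ≤ n) (hp : 2 * n < p)
    (A : Finset (ZMod p)) (hA : A.card = n) (hsym : ∀ v : ZMod p, v ∈ A → -v ∈ A)
    (Ω : Type) (_ : MeasurableSpace Ω) (μ : Measure Ω) (_ : IsProbabilityMeasure μ)
    (Y : Fin 3 → Ω → ZMod p)
    (hind : iIndepFun Y μ)
    (hunif : ∀ i, ∀ a : ZMod p, μ {ω | Y i ω = a} = if a ∈ A then ((A.card : ℝ≥0∞))⁻¹ else 0) :
    ∀ x : ZMod p,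
      μ {ω | Y 0 ω + Y 1 ω + Y 2 ω = x} ≤ ENNReal.ofReal (0.99993 / n) := by
  have hcount : ∀ x : ZMod p,
      100000 * (∑ a ∈ A, ∑ b ∈ A, if x - a - b ∈ A then (1:ℕ) else 0) ≤ 99993 * n ^ 2 :=
    fun x => count_bound hn hp A hA x
  intro x
  classical
  have hnpos : 0 < n := by omega
  set v : ZMod p × ZMod p → Fin 3 → ZMod p := fun c => ![c.1, c.2, x - c.1 - c.2] with hv
  set E : ZMod p × ZMod p → Set Ω :=
    fun c => ⋂ i ∈ (Finset.univ : Finset (Fin 3)), Y i ⁻¹' {v c i} with hE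
  have hsub : {ω | Y 0 ω + Y 1 ω + Y 2 ω = x} ⊆ ⋃ c : ZMod p × ZMod p, E c := by
    intro ω hω
    simp only [Set.mem_setOf_eq] at hω
    refine Set.mem_iUnion.2 ⟨(Y 0 ω, Y 1 ω), ?_⟩
    rw [hE]
    simp only [Set.mem_iInter]
    intro i _
    fin_cases i
    · simp [hv]
    · simp [hv]
    · simp only [hv, Set.mem_preimage, Set.mem_singleton_iff]
      show Y 2 ω = x - Y 0 ω - Y 1 ω
      rw [← hω]; ring
  have hEμ : ∀ c : ZMod p × ZMod p,
      μ (E c) = ∏ i : Fin 3, μ (Y i ⁻¹' {v c i}) := by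
    intro c
    rw [hE]
    exact hind.measure_inter_preimage_eq_mul Finset.univ
      (fun i _ => measurableSet_singleton (v c i))
  have hpre : ∀ (i : Fin 3) (a : ZMod p),
      μ (Y i ⁻¹' {a}) = if a ∈ A then ((n : ℝ≥0∞))⁻¹ else 0 := by
    intro i a
    have h := hunif i a
    rw [hA] at h
    exact h
  set T := ∑ a ∈ A, ∑ b ∈ A, (if x - a - b ∈ A then (1:ℕ) else 0) with hT
  have hmain : μ {ω | Y 0 ω + Y 1 ω + Y 2 ω = x} ≤ (T : ℝ≥0∞) * ((n : ℝ≥0∞)⁻¹) ^ 3 := by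
    calc μ {ω | Y 0 ω + Y 1 ω + Y 2 ω = x} ≤ μ (⋃ c : ZMod p × ZMod p, E c) :=
          measure_mono hsub
      _ ≤ ∑' c : ZMod p × ZMod p, μ (E c) := measure_iUnion_le E
      _ = ∑ c : ZMod p × ZMod p, μ (E c) := tsum_fintype _
      _ = ∑ c : ZMod p × ZMod p, ((if c.1 ∈ A then ((n : ℝ≥0∞))⁻¹ else 0)
            * (if c.2 ∈ A then ((n : ℝ≥0∞))⁻¹ else 0)
            * (if x - c.1 - c.2 ∈ A then ((n : ℝ≥0∞))⁻¹ else 0)) := by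
          refine Finset.sum_congr rfl fun c _ => ?_
          rw [hEμ c, Fin.prod_univ_three]
          rw [hpre 0, hpre 1, hpre 2]
          simp [hv]
      _ = (T : ℝ≥0∞) * ((n : ℝ≥0∞)⁻¹) ^ 3 := by
          rw [Fintype.sum_prod_type, hT]
          push_cast
          have h1 : ∀ a b : ZMod p,
              ((if a ∈ A then ((n:ℝ≥0∞))⁻¹ else 0) * (if b ∈ A then ((n:ℝ≥0∞))⁻¹ else 0))
                * (if x - a - b ∈ A then ((n:ℝ≥0∞))⁻¹ else 0)
              = if a ∈ A then (if b ∈ A then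
                  (if x - a - b ∈ A then ((n:ℝ≥0∞)⁻¹)^3 else 0) else 0) else 0 := by
            intro a b
            by_cases ha : a ∈ A <;> by_cases hb : b ∈ A <;> by_cases hc : x - a - b ∈ A <;>
              simp [ha, hb, hc, pow_succ, mul_assoc]
          simp only [h1]
          calc ∑ a : ZMod p, ∑ b : ZMod p,
                (if a ∈ A then if b ∈ A then
                  (if x - a - b ∈ A then ((n:ℝ≥0∞)⁻¹)^3 else 0) else 0 else 0)
              = ∑ a : ZMod p, (if a ∈ A then (∑ b : ZMod p, if b ∈ A then
                  (if x - a - b ∈ A then ((n:ℝ≥0∞)⁻¹)^3 else 0) else 0) else 0) := by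
                refine Finset.sum_congr rfl fun a _ => ?_
                by_cases ha : a ∈ A <;> simp [ha]
            _ = ∑ a ∈ A, ∑ b : ZMod p, (if b ∈ A then
                  (if x - a - b ∈ A then ((n:ℝ≥0∞)⁻¹)^3 else 0) else 0) := by
                rw [Finset.sum_ite_mem, Finset.univ_inter]
            _ = ∑ a ∈ A, ∑ b ∈ A, (if x - a - b ∈ A then ((n:ℝ≥0∞)⁻¹)^3 else 0) := by
                refine Finset.sum_congr rfl fun a _ => ?_
                rw [Finset.sum_ite_mem, Finset.univ_inter]
            _ = (∑ a ∈ A, ∑ b ∈ A, if x - a - b ∈ A then (1:ℝ≥0∞) else 0) * ((n:ℝ≥0∞)⁻¹)^3 := by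
                rw [Finset.sum_mul]
                refine Finset.sum_congr rfl fun a _ => ?_
                rw [Finset.sum_mul]
                refine Finset.sum_congr rfl fun b _ => ?_
                by_cases hc : x - a - b ∈ A <;> simp [hc]
  have hn0R : (0:ℝ) < (n:ℝ) := by exact_mod_cast hnpos
  have hnne : ((n:ℝ≥0∞))⁻¹ ≠ ∞ := by
    simp [ENNReal.inv_ne_top]
    exact_mod_cast hnpos.ne'
  have hne : ((T:ℝ≥0∞) * ((n:ℝ≥0∞)⁻¹)^3) ≠ ∞ := by
    apply ENNReal.mul_ne_top (ENNReal.natCast_ne_top T)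
    exact ENNReal.pow_ne_top hnne
  have htoReal : ((T:ℝ≥0∞) * ((n:ℝ≥0∞)⁻¹)^3).toReal = (T:ℝ) * ((n:ℝ)⁻¹)^3 := by
    rw [ENNReal.toReal_mul, ENNReal.toReal_pow, ENNReal.toReal_inv]
    simp
  have hTle : (100000:ℝ) * (T:ℝ) ≤ 99993 * (n:ℝ)^2 := by exact_mod_cast hcount x
  have hreal : (T:ℝ) * ((n:ℝ)⁻¹)^3 ≤ 0.99993 / (n:ℝ) := by
    have heq : (T:ℝ) * ((n:ℝ)⁻¹)^3 = (T:ℝ) / (n:ℝ)^3 := by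
      rw [inv_pow]; exact (div_eq_mul_inv _ _).symm
    rw [heq, div_le_div_iff₀ (by positivity) hn0R]
    have h2 := mul_le_mul_of_nonneg_right hTle (le_of_lt hn0R)
    nlinarith [h2]
  have hfin : (T : ℝ≥0∞) * ((n : ℝ≥0∞)⁻¹) ^ 3 ≤ ENNReal.ofReal (0.99993 / n) := by
    rw [← ENNReal.ofReal_toReal hne, htoReal]
    exact ENNReal.ofReal_le_ofReal hreal
  exact hmain.trans hfin
end

section
/- Let p be a prime, let n ≥ 2 with p > 2n, and let A be any subset of ℤ_p := ℤ/pℤ of cardinality n. Let Y₁, Y₂, Y₃ be independent random variables each uniformly distributed on A, and set Y = Y₁ + Y₂ + Y₃. Then P[Y = x] ≤ 0.999986 / n for every x ∈ ℤ_p. -/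
open MeasureTheory ProbabilityTheory ENNReal


namespace Stmt12Aux
set_option linter.unusedSectionVars false

variable {p : ℕ} [Fact p.Prime]

/-- number of representations of `s` as `a+b`, `a ∈ A`, `b ∈ B`. -/
def rep (A B : Finset (ZMod p)) (s : ZMod p) : ℕ :=
  ((A ×ˢ B).filter fun q => q.1 + q.2 = s).card

lemma sum_rep (A B : Finset (ZMod p)) : ∑ s : ZMod p, rep A B s = A.card * B.card := by
  rw [← Finset.card_product]
  exact (Finset.card_eq_sum_card_fiberwise
    (f := fun q : ZMod p × ZMod p => q.1 + q.2) (t := Finset.univ)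
    (fun x _ => Finset.mem_univ _)).symm

lemma rep_le_right (A B : Finset (ZMod p)) (s : ZMod p) : rep A B s ≤ B.card := by
  apply Finset.card_le_card_of_injOn (fun q => q.2)
  · intro q hq
    simp only [Finset.mem_coe, Finset.mem_filter, Finset.mem_product] at hq
    exact hq.1.2
  · intro q hq q' hq' h
    simp only [Finset.mem_coe, Finset.mem_filter, Finset.mem_product] at hq hq'
    have : q.1 = q'.1 := by
      have := hq.2.trans hq'.2.symm
      simp only [h] at this
      exact add_right_cancel this
    exact Prod.ext this h

lemma rep_mono {A A' B B' : Finset (ZMod p)} (hA : A ⊆ A') (hB : B ⊆ B') (s : ZMod p) :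
    rep A B s ≤ rep A' B' s := by
  apply Finset.card_le_card
  intro q hq
  simp only [Finset.mem_filter, Finset.mem_product] at hq ⊢
  exact ⟨⟨hA hq.1.1, hB hq.1.2⟩, hq.2⟩


section Transform
variable (A B : Finset (ZMod p)) (e : ZMod p)

/-- the transformed second set -/
def Bt : Finset (ZMod p) := B.filter fun b => b + e ∈ A

lemma key_inj (s : ZMod p) :
    rep (A \ ((Bt A B e).image (· + e))) (B \ Bt A B e) s
      + rep (A ∪ B.image (· + e)) (Bt A B e) s ≤ rep A B s := by
  classical
  set B' := Bt A B e with hB'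
  set P : Finset (ZMod p × ZMod p) := (A ×ˢ B).filter (fun q => q.1 + q.2 = s) with hP
  set P₂ : Finset (ZMod p × ZMod p) :=
    (((A \ (B'.image (· + e))) ×ˢ (B \ B'))).filter (fun q => q.1 + q.2 = s) with hP2
  set P' : Finset (ZMod p × ZMod p) :=
    (((A ∪ B.image (· + e)) ×ˢ B')).filter (fun q => q.1 + q.2 = s) with hP'
  have hP2P : P₂ ⊆ P := by
    intro q hq
    simp only [hP2, hP, Finset.mem_filter, Finset.mem_product, Finset.mem_sdiff] at hq ⊢
    exact ⟨⟨hq.1.1.1, hq.1.2.1⟩, hq.2⟩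
  have hcard : P'.card ≤ (P \ P₂).card := by
    apply Finset.card_le_card_of_injOn (fun q => if q.1 ∈ A then q else (q.2 + e, q.1 - e))
    · intro q hq
      simp only [Finset.mem_coe, hP', Finset.mem_filter, Finset.mem_product, Finset.mem_union] at hq
      obtain ⟨⟨hq1, hq2⟩, hqs⟩ := hq
      have hq2' : q.2 ∈ B ∧ q.2 + e ∈ A := by
        simpa [hB', Bt, Finset.mem_filter] using hq2
      by_cases h1 : q.1 ∈ A
      · simp only [h1, if_pos]
        simp only [Finset.mem_coe, Finset.mem_sdiff, hP, hP2, Finset.mem_filter, Finset.mem_product,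
          Finset.mem_sdiff]
        refine ⟨⟨⟨h1, hq2'.1⟩, hqs⟩, ?_⟩
        intro hcon
        exact hcon.1.2.2 hq2
      · simp only [h1, if_neg, if_false]
        obtain ⟨b, hb, hbe⟩ : ∃ b ∈ B, b + e = q.1 := by
          rcases hq1 with h | h
          · exact absurd h h1
          · exact Finset.mem_image.mp h
        simp only [Finset.mem_coe, Finset.mem_sdiff, hP, hP2, Finset.mem_filter, Finset.mem_product,
          Finset.mem_sdiff]
        constructor
        · constructor
          · constructor
            · exact hq2'.2
            · have : q.1 - e = b := by rw [← hbe]; ring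
              rw [this]; exact hb
          · have : q.2 + e + (q.1 - e) = q.1 + q.2 := by ring
            rw [this, hqs]
        · intro hcon
          apply hcon.1.1.2
          simp only [Finset.mem_image]
          exact ⟨q.2, hq2, rfl⟩
    · intro q hq q' hq' hEq
      simp only [Finset.mem_coe, hP', Finset.mem_filter, Finset.mem_product] at hq hq'
      have hq2A : q.2 + e ∈ A := by
        have := hq.1.2; simp only [hB', Bt, Finset.mem_filter] at this; exact this.2
      have hq2A' : q'.2 + e ∈ A := by
        have := hq'.1.2; simp only [hB', Bt, Finset.mem_filter] at this; exact this.2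
      by_cases h1 : q.1 ∈ A <;> by_cases h2 : q'.1 ∈ A <;>
        simp only [h1, h2, if_pos, if_neg, if_false, if_true] at hEq
      · exact hEq
      · exfalso; apply h2
        have : q'.2 + e = q.1 := congrArg Prod.fst hEq.symm
        have h12 : q.1 - e = q'.2 := by rw [← this]; ring
        have h21 : q'.1 - e = q.2 := by
          have := congrArg Prod.snd hEq.symm; simpa using this
        have : q'.1 = q.2 + e := eq_add_of_sub_eq h21
        rw [this]; exact hq2A
      · exfalso; apply h1
        have : q.2 + e = q'.1 := congrArg Prod.fst hEq
        have h12 : q.1 - e = q'.2 := by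
          have := congrArg Prod.snd hEq; simpa using this
        have : q.1 = q'.2 + e := by rw [← h12]; ring
        rw [this]; exact hq2A'
      · have h1' : q.2 + e = q'.2 + e := congrArg Prod.fst hEq
        have h2' : q.1 - e = q'.1 - e := congrArg Prod.snd hEq
        have : q.2 = q'.2 := by
          have := h1'; exact add_right_cancel this
        have : q.1 = q'.1 := by
          have h3 := sub_left_inj.mp h2'
          exact h3
        exact Prod.ext this ‹q.2 = q'.2›
  have hsd := Finset.card_sdiff_of_subset hP2P
  have hle : P₂.card ≤ P.card := Finset.card_le_card hP2P
  show P₂.card + P'.card ≤ P.card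
  omega

end Transform

section Cards
variable (A B : Finset (ZMod p)) (e : ZMod p)

lemma Bt_subset : Bt A B e ⊆ B := Finset.filter_subset _ _

lemma image_Bt_subset : (Bt A B e).image (· + e) ⊆ A := by
  intro x hx
  obtain ⟨b, hb, rfl⟩ := Finset.mem_image.mp hx
  exact (Finset.mem_filter.mp hb).2

lemma card_image_Bt : ((Bt A B e).image (· + e)).card = (Bt A B e).card :=
  Finset.card_image_of_injective _ (add_left_injective e)

lemma card_Aunion : (A ∪ B.image (· + e)).card + (Bt A B e).card = A.card + B.card := by
  have h1 : A ∩ B.image (· + e) = (Bt A B e).image (· + e) := by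
    ext x
    simp only [Finset.mem_inter, Finset.mem_image, Bt, Finset.mem_filter]
    constructor
    · rintro ⟨hxA, b, hb, rfl⟩
      exact ⟨b, ⟨hb, hxA⟩, rfl⟩
    · rintro ⟨b, ⟨hb, hbA⟩, rfl⟩
      exact ⟨hbA, b, hb, rfl⟩
  have h2 := Finset.card_union_add_card_inter A (B.image (· + e))
  rw [h1, card_image_Bt] at h2
  have h3 : (B.image (· + e)).card = B.card :=
    Finset.card_image_of_injective _ (add_left_injective e)
  omega

lemma card_A2 : (A \ ((Bt A B e).image (· + e))).card = A.card - (Bt A B e).card := by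
  rw [Finset.card_sdiff_of_subset (image_Bt_subset A B e), card_image_Bt]

lemma card_B2 : (B \ Bt A B e).card = B.card - (Bt A B e).card :=
  Finset.card_sdiff_of_subset (Bt_subset A B e)

end Cards

lemma rep_univ (B : Finset (ZMod p)) (s : ZMod p) :
    rep (Finset.univ : Finset (ZMod p)) B s = B.card := by
  classical
  apply Finset.card_bij (fun q _ => q.2)
  · intro q hq
    simp only [Finset.mem_filter, Finset.mem_product] at hq
    exact hq.1.2
  · intro q hq q' hq' h
    simp only [Finset.mem_filter, Finset.mem_product] at hq hq'
    have : q.1 = q'.1 := by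
      have := hq.2.trans hq'.2.symm
      rw [h] at this
      exact add_right_cancel this
    exact Prod.ext this h
  · intro b hb
    refine ⟨(s - b, b), ?_, rfl⟩
    simp only [Finset.mem_filter, Finset.mem_product]
    exact ⟨⟨Finset.mem_univ _, hb⟩, by ring⟩

lemma stall_univ (A B : Finset (ZMod p)) (hBA : B.card ≤ A.card) (hB2 : 2 ≤ B.card)
    (hst : ∀ a ∈ A, ∀ b ∈ B, Bt A B (a - b) = B) : A = Finset.univ := by
  classical
  haveI : NeZero p := ⟨(Fact.out : p.Prime).ne_zero⟩
  obtain ⟨b₁, hb₁, b₂, hb₂, hne⟩ := Finset.one_lt_card.mp hB2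
  set d := b₁ - b₂ with hd
  have hd0 : d ≠ 0 := sub_ne_zero.mpr hne
  have hstep : ∀ a ∈ A, a + d ∈ A := by
    intro a ha
    have h := hst a ha b₂ hb₂
    have hb₁' : b₁ ∈ Bt A B (a - b₂) := h.symm ▸ hb₁
    have := (Finset.mem_filter.mp hb₁').2
    have heq : b₁ + (a - b₂) = a + d := by rw [hd]; ring
    rwa [heq] at this
  have hA0 : A.Nonempty := Finset.card_pos.mp (by omega)
  obtain ⟨a₀, ha₀⟩ := hA0
  have hiter : ∀ k : ℕ, a₀ + k • d ∈ A := by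
    intro k
    induction k with
    | zero => simpa using ha₀
    | succ k ih =>
      have : a₀ + (k + 1) • d = (a₀ + k • d) + d := by
        rw [add_nsmul, one_nsmul]; ring
      rw [this]
      exact hstep _ ih
  apply Finset.eq_univ_of_forall
  intro y
  have := hiter ((y - a₀) * d⁻¹).val
  rwa [nsmul_eq_mul, ZMod.natCast_rightInverse _, mul_assoc,
    inv_mul_cancel₀ hd0, mul_one, add_sub_cancel] at this

end Stmt12Aux

namespace Stmt12Aux
set_option linter.unusedSectionVars false
set_option linter.unusedVariables false


lemma pollard_arith (a b t β P : ℕ) (h1 : 1 ≤ β) (h2 : β < t) (h3 : t < b) (h4 : b ≤ a)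
    (h5 : a ≤ P) :
    t * min P (a + b - t) ≤ (a + b - β) * β + (t - β) * min P (a - β + (b - β) - (t - β)) := by
  have e1 : a - β + (b - β) - (t - β) = a + b - t - β := by omega
  rw [e1]
  rcases le_total P (a + b - t - β) with hc | hc
  · rw [min_eq_left hc, min_eq_left (show P ≤ a + b - t by omega)]
    calc t * P = β * P + (t - β) * P := by rw [← Nat.add_mul]; congr 1; omega
      _ ≤ (a + b - β) * β + (t - β) * P := by
          have h : β * P ≤ (a + b - β) * β := by
            calc β * P ≤ β * (a + b - β) := Nat.mul_le_mul_left _ (by omega)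
              _ = (a + b - β) * β := Nat.mul_comm _ _
          omega
  · rw [min_eq_right hc]
    have h9 : min P (a + b - t) ≤ a + b - t := min_le_right _ _
    have hmain : t * (a + b - t) ≤ (a + b - β) * β + (t - β) * (a + b - t - β) := by
      zify [show t ≤ a + b by omega, show β ≤ a + b by omega, show β ≤ a + b - t by omega,
        show β ≤ t by omega]
      nlinarith [sq_nonneg ((t : ℤ) - β)]
    calc t * min P (a + b - t) ≤ t * (a + b - t) := Nat.mul_le_mul_left _ h9
      _ ≤ _ := hmain


theorem pollard {p : ℕ} [Fact p.Prime] :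
    ∀ (n : ℕ) (A B : Finset (ZMod p)) (t : ℕ), B.card = n → 1 ≤ t → t ≤ B.card →
      B.card ≤ A.card → t * min p (A.card + B.card - t) ≤ ∑ s : ZMod p, min t (rep A B s) := by
  intro n
  induction n using Nat.strong_induction_on with
  | _ n IH =>
  intro A B t hn ht htB hBA
  haveI : NeZero p := ⟨(Fact.out : p.Prime).ne_zero⟩
  have hAp : A.card ≤ p := by
    have := Finset.card_le_univ A
    rwa [ZMod.card p] at this
  rcases eq_or_lt_of_le htB with heq | hlt
  · -- base case t = B.card
    have hr : ∀ s ∈ (Finset.univ : Finset (ZMod p)), min t (rep A B s) = rep A B s :=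
      fun s _ => min_eq_right (heq ▸ rep_le_right A B s)
    rw [Finset.sum_congr rfl hr, sum_rep]
    have h1 : min p (A.card + B.card - t) ≤ A.card := le_trans (min_le_right _ _) (by omega)
    calc t * min p (A.card + B.card - t) ≤ t * A.card := Nat.mul_le_mul_left _ h1
      _ = A.card * B.card := by rw [heq, Nat.mul_comm]
  · by_cases hst : ∀ a ∈ A, ∀ b ∈ B, Bt A B (a - b) = B
    · -- stall case : A = univ
      have hAuniv := stall_univ A B hBA (by omega) hst
      have h1 : ∀ s ∈ (Finset.univ : Finset (ZMod p)), min t (rep A B s) = t := by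
        intro s _
        rw [hAuniv, rep_univ]
        exact min_eq_left (le_of_lt hlt)
      rw [Finset.sum_congr rfl h1, Finset.sum_const, Finset.card_univ, ZMod.card, smul_eq_mul]
      calc t * min p (A.card + B.card - t) ≤ t * p := Nat.mul_le_mul_left _ (min_le_left _ _)
        _ = p * t := Nat.mul_comm _ _
    · push_neg at hst
      obtain ⟨a, ha, b, hb, hne⟩ := hst
      set e := a - b with he
      have hbB' : b ∈ Bt A B e := by
        simp only [Bt, Finset.mem_filter]
        refine ⟨hb, ?_⟩
        have : b + e = a := by rw [he]; ring
        rw [this]; exact ha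
      have hβpos : 1 ≤ (Bt A B e).card := Finset.card_pos.mpr ⟨b, hbB'⟩
      have hβlt : (Bt A B e).card < B.card :=
        Finset.card_lt_card (Finset.ssubset_iff_subset_ne.mpr ⟨Bt_subset A B e, hne⟩)
      have hcardsum := card_Aunion A B e
      have hA'card : A.card ≤ (A ∪ B.image (· + e)).card :=
        Finset.card_le_card Finset.subset_union_left
      by_cases hgood : t ≤ (Bt A B e).card
      · -- good case
        have hpoint : ∀ s ∈ (Finset.univ : Finset (ZMod p)),
            min t (rep (A ∪ B.image (· + e)) (Bt A B e) s) ≤ min t (rep A B s) := by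
          intro s _
          have h := key_inj A B e s
          exact min_le_min (le_refl t) (by omega)
        have hIH := IH (Bt A B e).card (by omega) (A ∪ B.image (· + e)) (Bt A B e) t rfl ht
          hgood (by omega)
        calc t * min p (A.card + B.card - t)
            = t * min p ((A ∪ B.image (· + e)).card + (Bt A B e).card - t) := by
              congr 2; omega
          _ ≤ ∑ s : ZMod p, min t (rep (A ∪ B.image (· + e)) (Bt A B e) s) := hIH
          _ ≤ ∑ s : ZMod p, min t (rep A B s) := Finset.sum_le_sum hpoint
      · -- bad case
        push_neg at hgood
        set β := (Bt A B e).card with hβ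
        have hA2 := card_A2 A B e
        have hB2 := card_B2 A B e
        have hpoint : ∀ s ∈ (Finset.univ : Finset (ZMod p)),
            rep (A ∪ B.image (· + e)) (Bt A B e) s
              + min (t - β) (rep (A \ ((Bt A B e).image (· + e))) (B \ Bt A B e) s)
              ≤ min t (rep A B s) := by
          intro s _
          have h1 := key_inj A B e s
          have h2 := rep_le_right (A ∪ B.image (· + e)) (Bt A B e) s
          omega
        have hIH := IH (B \ Bt A B e).card (by omega)
          (A \ ((Bt A B e).image (· + e))) (B \ Bt A B e) (t - β) rfl
          (by omega) (by omega) (by omega)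
        have hsum' := sum_rep (A ∪ B.image (· + e)) (Bt A B e)
        calc t * min p (A.card + B.card - t)
            ≤ (A.card + B.card - β) * β
              + (t - β) * min p (A.card - β + (B.card - β) - (t - β)) :=
              pollard_arith A.card B.card t β p hβpos hgood hlt hBA hAp
          _ ≤ ∑ s : ZMod p, (rep (A ∪ B.image (· + e)) (Bt A B e) s
              + min (t - β) (rep (A \ ((Bt A B e).image (· + e))) (B \ Bt A B e) s)) := by
              rw [Finset.sum_add_distrib, hsum']
              have e2 : (A ∪ B.image (· + e)).card = A.card + B.card - β := by omega
              have e3 : (A \ ((Bt A B e).image (· + e))).card + (B \ Bt A B e).card - (t - β)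
                  = A.card - β + (B.card - β) - (t - β) := by omega
              rw [e2]
              exact Nat.add_le_add (le_refl _) (by rw [← e3]; exact hIH)
          _ ≤ ∑ s : ZMod p, min t (rep A B s) := Finset.sum_le_sum hpoint

end Stmt12Aux

namespace Stmt12Aux
set_option linter.unusedSectionVars false

lemma concentration {p : ℕ} [Fact p.Prime] (A : Finset (ZMod p)) (hn : 2 ≤ A.card)
    (hp : 2 * A.card < p) (X : Finset (ZMod p)) (hX : X.card ≤ A.card) :
    8 * ∑ s ∈ X, rep A A s ≤ 7 * (A.card * A.card) := by
  classical
  obtain ⟨t, htdef⟩ : ∃ t, t = A.card / 2 := ⟨_, rfl⟩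
  have ht1 : 1 ≤ t := by omega
  have htn : t ≤ A.card := by omega
  have hpol := pollard A.card A A t rfl ht1 htn le_rfl
  have hmin : min p (A.card + A.card - t) = A.card + A.card - t := min_eq_right (by omega)
  rw [hmin] at hpol
  have hsplitmin := Finset.sum_sdiff (f := fun s => min t (rep A A s)) (Finset.subset_univ X)
  have hsplitrep := Finset.sum_sdiff (f := fun s => rep A A s) (Finset.subset_univ X)
  rw [sum_rep] at hsplitrep
  have hm2 : ∑ s ∈ Finset.univ \ X, min t (rep A A s) ≤ ∑ s ∈ Finset.univ \ X, rep A A s :=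
    Finset.sum_le_sum fun s _ => min_le_right _ _
  have hm1 : ∑ s ∈ X, min t (rep A A s) ≤ t * A.card := by
    calc ∑ s ∈ X, min t (rep A A s) ≤ ∑ s ∈ X, t :=
          Finset.sum_le_sum fun s _ => min_le_left _ _
      _ = X.card * t := by rw [Finset.sum_const, smul_eq_mul]
      _ ≤ A.card * t := Nat.mul_le_mul_right _ hX
      _ = t * A.card := Nat.mul_comm _ _
  have hq : A.card = 2 * t ∨ A.card = 2 * t + 1 := by omega
  have hnl : A.card * A.card + 8 * (t * t) ≤ 8 * (t * A.card) := by
    rcases hq with h | h <;> rw [h] <;> nlinarith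
  have hexp : t * (A.card + A.card - t) + t * t = 2 * (t * A.card) := by
    zify [show t ≤ A.card + A.card by omega]
    ring
  omega

end Stmt12Aux

namespace Stmt12Aux
set_option linter.unusedSectionVars false

lemma count_bound {p : ℕ} [Fact p.Prime] (A : Finset (ZMod p)) (hn : 2 ≤ A.card)
    (hp : 2 * A.card < p) (x : ZMod p) :
    8 * ((A ×ˢ A).filter fun q => x - q.1 - q.2 ∈ A).card ≤ 7 * (A.card * A.card) := by
  classical
  have hpart := Finset.card_eq_sum_card_fiberwise
    (f := fun q : ZMod p × ZMod p => q.1 + q.2)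
    (s := (A ×ˢ A).filter fun q => x - q.1 - q.2 ∈ A) (t := Finset.univ)
    (fun q _ => Finset.mem_univ _)
  have hfib : ∀ s : ZMod p,
      (((A ×ˢ A).filter fun q => x - q.1 - q.2 ∈ A).filter fun q => q.1 + q.2 = s).card
        = if x - s ∈ A then rep A A s else 0 := by
    intro s
    split_ifs with h
    · unfold rep
      congr 1
      ext q
      simp only [Finset.mem_filter, Finset.mem_product]
      constructor
      · rintro ⟨⟨hq, _⟩, hsum⟩
        exact ⟨hq, hsum⟩
      · rintro ⟨hq, hsum⟩
        refine ⟨⟨hq, ?_⟩, hsum⟩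
        have : x - q.1 - q.2 = x - s := by rw [← hsum]; ring
        rw [this]; exact h
    · rw [Finset.card_eq_zero]
      ext q
      simp only [Finset.mem_filter, Finset.mem_product, Finset.notMem_empty, iff_false]
      rintro ⟨⟨_, hA⟩, hsum⟩
      apply h
      have : x - s = x - q.1 - q.2 := by rw [← hsum]; ring
      rw [this]; exact hA
  rw [hpart, Finset.sum_congr rfl fun s _ => hfib s, ← Finset.sum_filter]
  have hXcard : (Finset.univ.filter fun s : ZMod p => x - s ∈ A).card ≤ A.card := by
    apply Finset.card_le_card_of_injOn (fun s => x - s)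
    · intro s hs
      simpa using (Finset.mem_filter.mp hs).2
    · intro s _ s' _ h
      exact sub_right_injective h
  exact concentration A hn hp _ hXcard

end Stmt12Aux


/-- Proposition 3.2: Let `p` be prime, `n ≥ 2` with `p > 2n`, `A ⊆ ℤ_p` any
set of cardinality `n`, and `Y₁, Y₂, Y₃` independent uniform on `A`. Setting `Y = Y₁+Y₂+Y₃`,
one has `P[Y = x] ≤ 0.999986/n` for every `x ∈ ℤ_p`. -/
theorem stmt_12 (p : ℕ) [Fact p.Prime] (n : ℕ) (hn : 2 ≤ n) (hp : 2 * n < p)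
    (A : Finset (ZMod p)) (hA : A.card = n)
    (Ω : Type) (_ : MeasurableSpace Ω) (μ : Measure Ω) (_ : IsProbabilityMeasure μ)
    (Y : Fin 3 → Ω → ZMod p)
    (hind : iIndepFun Y μ)
    (hunif : ∀ i, ∀ a : ZMod p, μ {ω | Y i ω = a} = if a ∈ A then ((A.card : ℝ≥0∞))⁻¹ else 0) :
    ∀ x : ZMod p,
      μ {ω | Y 0 ω + Y 1 ω + Y 2 ω = x} ≤ ENNReal.ofReal (0.999986 / n) := by

  intro x
  classical
  subst hA
  set n := A.card with hndef
  set v : ZMod p × ZMod p → Fin 3 → ZMod p := fun q => ![q.1, q.2, x - q.1 - q.2] with hv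
  have hcover : {ω | Y 0 ω + Y 1 ω + Y 2 ω = x}
      ⊆ ⋃ q : ZMod p × ZMod p, ⋂ i : Fin 3, Y i ⁻¹' {v q i} := by
    intro ω hω
    simp only [Set.mem_setOf_eq] at hω
    refine Set.mem_iUnion.mpr ⟨(Y 0 ω, Y 1 ω), Set.mem_iInter.mpr fun i => ?_⟩
    have h2 : Y 2 ω = x - Y 0 ω - Y 1 ω := by rw [← hω]; ring
    fin_cases i
    · exact rfl
    · exact rfl
    · show ω ∈ Y 2 ⁻¹' {v (Y 0 ω, Y 1 ω) 2}
      simp only [hv, Set.mem_preimage, Set.mem_singleton_iff, Matrix.cons_val_two,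
        Matrix.tail_cons, Matrix.head_cons]
      exact h2
  have hterm : ∀ q : ZMod p × ZMod p,
      μ (⋂ i : Fin 3, Y i ⁻¹' {v q i}) = ∏ i : Fin 3, μ (Y i ⁻¹' {v q i}) := by
    intro q
    exact hind.meas_iInter fun i => ⟨{v q i}, MeasurableSpace.measurableSet_top, rfl⟩
  have hpre : ∀ (i : Fin 3) (c : ZMod p), μ (Y i ⁻¹' {c}) = if c ∈ A then (n : ℝ≥0∞)⁻¹ else 0 := by
    intro i c
    rw [show Y i ⁻¹' {c} = {ω | Y i ω = c} from rfl]
    exact hunif i c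
  calc μ {ω | Y 0 ω + Y 1 ω + Y 2 ω = x}
      ≤ μ (⋃ q : ZMod p × ZMod p, ⋂ i : Fin 3, Y i ⁻¹' {v q i}) := measure_mono hcover
    _ ≤ ∑' q : ZMod p × ZMod p, μ (⋂ i : Fin 3, Y i ⁻¹' {v q i}) := measure_iUnion_le _
    _ = ∑ q : ZMod p × ZMod p, μ (⋂ i : Fin 3, Y i ⁻¹' {v q i}) := tsum_fintype _
    _ = ∑ q : ZMod p × ZMod p,
          (if q.1 ∈ A ∧ q.2 ∈ A ∧ x - q.1 - q.2 ∈ A then ((n : ℝ≥0∞)⁻¹) ^ 3 else 0) := by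
        apply Finset.sum_congr rfl
        intro q _
        rw [hterm q, Fin.prod_univ_three]
        simp only [hv, Matrix.cons_val_zero, Matrix.cons_val_one, Matrix.head_cons,
          Matrix.cons_val_two, Matrix.tail_cons, hpre]
        by_cases h1 : q.1 ∈ A <;> by_cases h2 : q.2 ∈ A <;>
          by_cases h3 : x - q.1 - q.2 ∈ A <;>
          simp [h1, h2, h3, pow_succ, pow_zero, mul_assoc]
    _ = (((A ×ˢ A).filter fun q => x - q.1 - q.2 ∈ A).card : ℝ≥0∞) * ((n : ℝ≥0∞)⁻¹) ^ 3 := by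
        rw [← Finset.sum_filter]
        have hset : Finset.univ.filter
              (fun q : ZMod p × ZMod p => q.1 ∈ A ∧ q.2 ∈ A ∧ x - q.1 - q.2 ∈ A)
            = (A ×ˢ A).filter fun q => x - q.1 - q.2 ∈ A := by
          ext q
          simp only [Finset.mem_filter, Finset.mem_univ, true_and, Finset.mem_product]
          tauto
        rw [hset, Finset.sum_const, nsmul_eq_mul]
    _ ≤ ENNReal.ofReal (0.999986 / n) := by
        have hM := Stmt12Aux.count_bound A hn hp x
        set M := ((A ×ˢ A).filter fun q => x - q.1 - q.2 ∈ A).card with hMdef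
        have hn0 : (0:ℝ) < (n:ℝ) := by
          have : 0 < n := by omega
          exact_mod_cast this
        have hL : (M : ℝ≥0∞) * ((n : ℝ≥0∞)⁻¹) ^ 3
            = ENNReal.ofReal ((M:ℝ) * ((n:ℝ)⁻¹) ^ 3) := by
          rw [ENNReal.ofReal_mul (by positivity), ENNReal.ofReal_pow (by positivity),
            ENNReal.ofReal_inv_of_pos hn0, ENNReal.ofReal_natCast, ENNReal.ofReal_natCast]
        rw [hL]
        apply ENNReal.ofReal_le_ofReal
        have h8 : 8 * (M:ℝ) ≤ 7 * ((n:ℝ) * (n:ℝ)) := by exact_mod_cast hM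
        have hinv : ((n:ℝ)⁻¹) ^ 3 = ((n:ℝ) ^ 3)⁻¹ := by rw [inv_pow]
        rw [hinv, ← div_eq_mul_inv, div_le_div_iff₀ (by positivity) hn0]
        nlinarith [mul_le_mul_of_nonneg_right h8 (le_of_lt hn0), pow_pos hn0 3]
end
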